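/- arXiv:2005.11855 — 7 statements merged into one kernel-verified Lean document; each statement's English description precedes it below -/
import Mathlib

section
/- If a finite undirected graph B is a tree, then B has at most one pivot vertex (where a pivot vertex is a vertex v such that for every neighbor w of v, the orbit of w under the stabilizer of v in the automorphism group of B has even cardinality). -/
open SimpleGraph

/-- The automorphism group of a simple graph, as a subgroup of permutations. -/
def graphAut {V : Type*} (B : SimpleGraph V) : Subgroup (Equiv.Perm V) where
  carrier := {σ | ∀ a b : V, B.Adj (σ a) (σ b) ↔ B.Adj a b}
  one_mem' := by intro a b; rfl
  mul_mem' := by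
    intro σ τ hσ hτ a b
    simpa [Equiv.Perm.mul_apply] using (hσ (τ a) (τ b)).trans (hτ a b)
  inv_mem' := by
    intro σ hσ a b
    simpa using (hσ (σ⁻¹ a) (σ⁻¹ b)).symm

/-- `v` is a `G`-pivot vertex of the graph `B`: for every neighbour `w` of `v`, the orbit of `w`
under the stabilizer of `v` in `G` has even cardinality. -/
def IsPivot {V : Type*} (B : SimpleGraph V) (G : Type*) [Group G] [MulAction G V] (v : V) : Prop :=
  ∀ w : V, B.Adj v w → Even ((MulAction.orbit (MulAction.stabilizer G v) w).ncard)

/-! If `v` is a pivot vertex of a tree, every vertex `x ≠ v` has an orbit of even size under the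
stabilizer of `v`: the neighbour `w` of `v` on the path to `x` is fixed by everything fixing `v`
and `x`, so `|orbit w|` divides `|orbit x|`. Counting orbits, the tree has an odd number `n` of
vertices. Moving along an edge `ab` changes the total distance to all vertices by
`2 |{z closer to a}| - n`, which is odd, hence nonzero, and these increments grow along any path
leaving a minimiser; so a tree of odd order has a unique vertex of minimal total distance. That
vertex is fixed by every automorphism, so its orbit under the stabilizer of a pivot is a
singleton, which forces the pivot to be that vertex. -/

namespace SimpleGraph

variable {V W : Type*} {G : SimpleGraph V} {G' : SimpleGraph W}

lemma Hom.edist_map_le (f : G →g G') (u v : V) : G'.edist (f u) (f v) ≤ G.edist u v := by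
  by_cases h : G.Reachable u v
  · obtain ⟨p, hp⟩ := h.exists_walk_length_eq_edist
    calc G'.edist (f u) (f v) ≤ (p.map f).length := edist_le _
      _ = G.edist u v := by rw [Walk.length_map, hp]
  · exact edist_eq_top_of_not_reachable h ▸ le_top

lemma Iso.dist_map (f : G ≃g G') (u v : V) : G'.dist (f u) (f v) = G.dist u v := by
  refine congrArg ENat.toNat (le_antisymm (f.toHom.edist_map_le u v) ?_)
  simpa using f.symm.toHom.edist_map_le (f u) (f v)

lemma Connected.exists_adj_dist_add_one_eq (hG : G.Connected) {c x : V} (hx : x ≠ c) :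
    ∃ y, G.Adj x y ∧ G.dist c y + 1 = G.dist c x := by
  obtain ⟨p, hp⟩ := hG.exists_walk_length_eq_dist x c
  cases p with
  | nil => exact absurd rfl hx
  | @cons _ y _ hxy q =>
    refine ⟨y, hxy, ?_⟩
    have hq := dist_le q
    have htri := hG.dist_triangle (u := x) (v := y) (w := c)
    rw [dist_eq_one_iff_adj.mpr hxy] at htri
    rw [Walk.length_cons] at hp
    rw [dist_comm, dist_comm (u := c)]
    omega

lemma IsAcyclic.eq_of_adj_of_dist_add_one_eq (hG : G.IsAcyclic) {z x x' y : V}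
    (hx : G.Adj x y) (hx' : G.Adj x' y) (hdx : G.dist z x + 1 = G.dist z y)
    (hdx' : G.dist z x' + 1 = G.dist z y) : x = x' := by
  have hzy : G.Reachable z y := Reachable.of_dist_ne_zero (by omega)
  have geodesic_concat : ∀ {x} (hx : G.Adj x y), G.dist z x + 1 = G.dist z y →
      ∃ p : G.Walk z x, (p.concat hx).IsPath := fun hx hd ↦ by
    obtain ⟨p, hp⟩ := (hzy.trans hx.symm.reachable).exists_walk_length_eq_dist
    exact ⟨p, Walk.isPath_of_length_eq_dist _ (by rw [Walk.length_concat, hp, hd])⟩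
  obtain ⟨p, hp⟩ := geodesic_concat hx hdx
  obtain ⟨p', hp'⟩ := geodesic_concat hx' hdx'
  have := congrArg (fun q : G.Path z y ↦ q.1.penultimate)
    ((hG.subsingleton_path z y).elim ⟨_, hp⟩ ⟨_, hp'⟩)
  simpa only [Walk.penultimate_concat] using this

lemma IsTree.dist_add_one_eq_of_adj_of_adj (hG : G.IsTree) {z y' y x : V} (hy'y : G.Adj y' y)
    (hyx : G.Adj y x) (hne : y' ≠ x) (hz : G.dist z y' + 1 = G.dist z y) :
    G.dist z y + 1 = G.dist z x := by
  rcases hG.dist_eq_dist_add_one_of_adj z hyx with h | h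
  · exact absurd (hG.isAcyclic.eq_of_adj_of_dist_add_one_eq hy'y hyx.symm hz h.symm) hne
  · exact h.symm

lemma IsTree.exists_adj_forall_iso_apply_eq (hG : G.IsTree) {v x : V} (hvx : v ≠ x) :
    ∃ w, G.Adj v w ∧ ∀ f : G ≃g G, f v = v → f x = x → f w = w := by
  obtain ⟨w, hvw, hw⟩ := hG.connected.exists_adj_dist_add_one_eq hvx
  refine ⟨w, hvw, fun f hv hx ↦ ?_⟩
  have hfw : G.Adj (f w) v := hv ▸ f.map_adj_iff.mpr hvw.symm
  refine hG.isAcyclic.eq_of_adj_of_dist_add_one_eq (z := x) hfw hvw.symm ?_ hw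
  have := f.dist_map x w
  rw [hx] at this
  omega

section Centroid

variable [Fintype V]

noncomputable def distSum (G : SimpleGraph V) (y : V) : ℕ := ∑ z, G.dist z y

noncomputable def closerTo (G : SimpleGraph V) (a b : V) : Finset V :=
  Finset.univ.filter fun z ↦ G.dist z a < G.dist z b

lemma Iso.distSum_map (f : G ≃g G) (y : V) : G.distSum (f y) = G.distSum y := by
  rw [distSum, ← f.toEquiv.sum_comp]
  exact Finset.sum_congr rfl fun z _ ↦ f.dist_map z y

lemma IsTree.distSum_add_card_eq (hG : G.IsTree) {a b : V} (hab : G.Adj a b) :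
    G.distSum b + Fintype.card V = G.distSum a + 2 * (G.closerTo a b).card := by
  have step (z : V) :
      G.dist z b + 1 = G.dist z a + 2 * if G.dist z a < G.dist z b then 1 else 0 := by
    rcases hG.dist_eq_dist_add_one_of_adj z hab with h | h <;> split_ifs <;> omega
  calc G.distSum b + Fintype.card V = ∑ z, (G.dist z b + 1) := by
        simp [distSum, Finset.sum_add_distrib]
    _ = ∑ z, (G.dist z a + 2 * if G.dist z a < G.dist z b then 1 else 0) :=
        Finset.sum_congr rfl fun z _ ↦ step z
    _ = G.distSum a + 2 * (G.closerTo a b).card := by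
        simp only [Finset.sum_add_distrib, ← Finset.mul_sum, Finset.sum_boole, distSum, closerTo,
          Nat.cast_id]

lemma IsTree.closerTo_subset (hG : G.IsTree) {y' y x : V} (hy'y : G.Adj y' y) (hyx : G.Adj y x)
    (hne : y' ≠ x) : G.closerTo y' y ⊆ G.closerTo y x := by
  intro z hz
  simp only [closerTo, Finset.mem_filter, Finset.mem_univ, true_and] at hz ⊢
  have := hG.dist_eq_dist_add_one_of_adj z hy'y
  have := hG.dist_add_one_eq_of_adj_of_adj hy'y hyx hne (z := z) (by omega)
  omega

lemma IsTree.card_lt_two_mul_card_closerTo (hG : G.IsTree) (hodd : Odd (Fintype.card V)) {c : V}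
    (hc : ∀ x, G.distSum c ≤ G.distSum x) :
    ∀ k {y x : V}, G.dist c y = k → G.Adj y x → G.dist c y + 1 = G.dist c x →
      Fintype.card V < 2 * (G.closerTo y x).card := by
  obtain ⟨m, hm⟩ := hodd
  intro k
  induction k with
  | zero =>
    intro y x hy hyx _
    obtain rfl : c = y := hG.connected.dist_eq_zero_iff.mp hy
    have := hG.distSum_add_card_eq hyx
    have := hc x
    omega
  | succ k ih =>
    intro y x hy hyx hyx'
    have hyc : y ≠ c := by rintro rfl; simp at hy
    obtain ⟨y', hyy', hy'⟩ := hG.connected.exists_adj_dist_add_one_eq hyc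
    have := ih (by omega) hyy'.symm hy'
    have := Finset.card_le_card
      (hG.closerTo_subset hyy'.symm hyx (by rintro rfl; omega))
    omega

lemma IsTree.distSum_lt_of_ne (hG : G.IsTree) (hodd : Odd (Fintype.card V)) {c x : V}
    (hc : ∀ x, G.distSum c ≤ G.distSum x) (hx : x ≠ c) : G.distSum c < G.distSum x := by
  obtain ⟨y, hxy, hy⟩ := hG.connected.exists_adj_dist_add_one_eq hx
  have := hG.card_lt_two_mul_card_closerTo hodd hc _ rfl hxy.symm hy
  have := hG.distSum_add_card_eq hxy.symm
  have := hc y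
  omega

theorem IsTree.exists_forall_iso_apply_eq (hG : G.IsTree) (hodd : Odd (Fintype.card V)) :
    ∃ c, ∀ f : G ≃g G, f c = c := by
  have := hG.connected.nonempty
  obtain ⟨c, -, hc⟩ := Finset.univ.exists_min_image G.distSum Finset.univ_nonempty
  refine ⟨c, fun f ↦ by_contra fun hfc ↦ ?_⟩
  exact (hG.distSum_lt_of_ne hodd (fun x ↦ hc x (Finset.mem_univ x)) hfc).ne' (f.distSum_map c)

end Centroid

end SimpleGraph

namespace MulAction

variable {G X : Type*} [Group G] [MulAction G X]

lemma ncard_orbit_dvd_of_stabilizer_le {x w : X} (h : stabilizer G x ≤ stabilizer G w) :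
    (orbit G w).ncard ∣ (orbit G x).ncard := by
  rw [← index_stabilizer, ← index_stabilizer]
  exact Subgroup.index_dvd_of_le h

lemma ncard_orbit_eq_one_of_forall_smul_eq {x : X} (hx : ∀ g : G, g • x = x) :
    (orbit G x).ncard = 1 :=
  Set.ncard_eq_one.mpr ⟨x, Set.ext fun y ↦ by simp [mem_orbit_iff, hx, eq_comm]⟩

lemma odd_card_of_even_ncard_orbit [Finite X] {x₀ : X} (hx₀ : ∀ g : G, g • x₀ = x₀)
    (heven : ∀ x, x ≠ x₀ → Even (orbit G x).ncard) : Odd (Nat.card X) := by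
  classical
  have := Fintype.ofFinite (orbitRel.Quotient G X)
  let ω₀ : orbitRel.Quotient G X := Quotient.mk'' x₀
  have horbit₀ : Nat.card ω₀.orbit = 1 := by
    rw [Nat.card_coe_set_eq, orbitRel.Quotient.orbit_mk, ncard_orbit_eq_one_of_forall_smul_eq hx₀]
  rw [Nat.card_congr (selfEquivSigmaOrbits' G X), Nat.card_sigma,
    ← Finset.add_sum_erase _ _ (Finset.mem_univ ω₀), horbit₀, add_comm]
  refine (Finset.even_sum _ fun ω hω ↦ ?_).add_one
  rw [Nat.card_coe_set_eq, orbitRel.Quotient.orbit_eq_orbit_out ω Quotient.out_eq']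
  refine heven _ fun h ↦ (Finset.mem_erase.mp hω).1 ?_
  rw [← Quotient.out_eq' ω, h]

end MulAction

def graphAut.toIso {V : Type*} {B : SimpleGraph V} (σ : graphAut B) : B ≃g B :=
  ⟨σ.1, σ.2 _ _⟩

open MulAction

namespace SimpleGraph

variable {V : Type*} {B : SimpleGraph V}

lemma IsTree.even_ncard_orbit_of_isPivot (hB : B.IsTree) {v x : V}
    (hv : IsPivot B (graphAut B) v) (hx : x ≠ v) :
    Even (orbit (stabilizer (graphAut B) v) x).ncard := by
  obtain ⟨w, hvw, hw⟩ := hB.exists_adj_forall_iso_apply_eq hx.symm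
  refine even_iff_two_dvd.mpr ((hv w hvw).two_dvd.trans
    (ncard_orbit_dvd_of_stabilizer_le fun g hg ↦ ?_))
  exact hw (graphAut.toIso g.1) g.2 hg

lemma IsTree.eq_of_isPivot (hB : B.IsTree) {v c : V} (hc : ∀ f : B ≃g B, f c = c)
    (hv : IsPivot B (graphAut B) v) : v = c := by
  by_contra hvc
  have := hB.even_ncard_orbit_of_isPivot hv (Ne.symm hvc)
  rw [ncard_orbit_eq_one_of_forall_smul_eq fun g ↦ hc (graphAut.toIso g.1)] at this
  exact Nat.not_even_one this

end SimpleGraph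

/-- If a finite graph `B` is a tree, then `B` has at most one pivot vertex
(pivot vertex = `Aut(B)`-pivot vertex). -/
theorem stmt_0 {V : Type*} [Fintype V] (B : SimpleGraph V) (hB : B.IsTree) :
    {v : V | IsPivot B (graphAut B) v}.Subsingleton := by
  intro v hv u hu
  have hodd : Odd (Fintype.card V) := Nat.card_eq_fintype_card (α := V) ▸
    odd_card_of_even_ncard_orbit (G := stabilizer (graphAut B) v) (fun g ↦ g.2)
      fun _ hx ↦ hB.even_ncard_orbit_of_isPivot hv hx
  obtain ⟨c, hc⟩ := hB.exists_forall_iso_apply_eq hodd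
  exact (hB.eq_of_isPivot hc hv).trans (hB.eq_of_isPivot hc hu).symm
end

section
/- Let B be a finite connected graph with a group G acting by graph automorphisms, let W be the set of G-pivot vertices, and let v be any vertex of B. Then |W \ Gv| ≤ β(B) + |Gv| - 1, where Gv denotes the G-orbit of v and β(B) = |E| - |V| + 1. -/
open SimpleGraph

/-! Measure heights by the distance `δ` to the orbit `S = Gv`; `δ` is `G`-invariant. Every vertex
outside `S` has a neighbour of smaller height, and for a pivot `u` outside `S` the set of such
neighbours is stable under the stabilizer of `u`, hence contains a whole orbit of even size, so it
has at least two elements. Each edge joining vertices of different heights descends from exactly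
one endpoint, so `|V \ S| + |W \ S| ≤ |E|`. -/

open Finset

namespace SimpleGraph

variable {V : Type*} (B : SimpleGraph V)

/-- For `S = ∅` this is `sInf ∅ = 0`. -/
noncomputable def setDist (S : Set V) (u : V) : ℕ := sInf (B.dist u '' S)

variable {B} {S : Set V} {u x : V}

lemma setDist_le_dist (hx : x ∈ S) : B.setDist S u ≤ B.dist u x :=
  Nat.sInf_le ⟨x, hx, rfl⟩

lemma exists_mem_dist_eq_setDist (hS : S.Nonempty) (u : V) :
    ∃ x ∈ S, B.dist u x = B.setDist S u :=
  Nat.sInf_mem (hS.image _)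

lemma Connected.exists_adj_setDist_lt (hconn : B.Connected) (hS : S.Nonempty) (hu : u ∉ S) :
    ∃ y, B.Adj u y ∧ B.setDist S y < B.setDist S u := by
  obtain ⟨x, hx, hdist⟩ := exists_mem_dist_eq_setDist hS u
  obtain ⟨p, hp⟩ := hconn.exists_walk_length_eq_dist u x
  cases p with
  | nil => exact absurd hx hu
  | cons hadj q =>
    refine ⟨_, hadj, ?_⟩
    calc B.setDist S _ ≤ B.dist _ x := setDist_le_dist hx
      _ ≤ q.length := dist_le q
      _ < B.dist u x := by simp [← hp]
      _ = B.setDist S u := hdist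

lemma Reachable.dist_map_le {W : Type*} {B' : SimpleGraph W} (f : B →g B') {a b : V}
    (h : B.Reachable a b) : B'.dist (f a) (f b) ≤ B.dist a b := by
  obtain ⟨p, hp⟩ := h.exists_walk_length_eq_dist
  exact hp ▸ (p.length_map f) ▸ dist_le (p.map f)

lemma Connected.setDist_map_le (hconn : B.Connected) (f : B →g B) (hf : Set.MapsTo f S S)
    (u : V) : B.setDist S (f u) ≤ B.setDist S u := by
  rcases S.eq_empty_or_nonempty with rfl | hS
  · simp [setDist]
  obtain ⟨x, hx, hdist⟩ := exists_mem_dist_eq_setDist hS u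
  calc B.setDist S (f u) ≤ B.dist (f u) (f x) := setDist_le_dist (hf hx)
    _ ≤ B.dist u x := (hconn u x).dist_map_le f
    _ = B.setDist S u := hdist

lemma Connected.setDist_smul {G : Type*} [Group G] [MulAction G V]
    (hact : ∀ (g : G) (a b : V), B.Adj a b → B.Adj (g • a) (g • b)) (hconn : B.Connected)
    (hS : ∀ g : G, Set.MapsTo (g • ·) S S) (g : G) (u : V) :
    B.setDist S (g • u) = B.setDist S u := by
  have key (g : G) (u : V) : B.setDist S (g • u) ≤ B.setDist S u :=
    hconn.setDist_map_le ⟨(g • ·), hact g _ _⟩ (hS g) u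
  exact (key g u).antisymm (by simpa using key g⁻¹ (g • u))

section lowerNeighbors

variable [Fintype V] [DecidableRel B.Adj] {α : Type*} [LinearOrder α]

variable (B) in
def lowerNeighborFinset (h : V → α) (u : V) : Finset V := {y | B.Adj u y ∧ h y < h u}

variable {h : V → α}

@[simp] lemma mem_lowerNeighborFinset {y : V} :
    y ∈ B.lowerNeighborFinset h u ↔ B.Adj u y ∧ h y < h u := by
  simp [lowerNeighborFinset]

lemma sum_card_lowerNeighborFinset_le [DecidableEq V] :
    ∑ u, #(B.lowerNeighborFinset h u) ≤ #B.edgeFinset := by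
  rw [← card_sigma]
  refine card_le_card_of_injOn (fun p => s(p.1, p.2)) (fun p hp => ?_) ?_
  · simp only [mem_coe, mem_sigma, mem_univ, mem_lowerNeighborFinset, true_and] at hp
    simpa using hp.1
  · rintro ⟨a, b⟩ hab ⟨c, d⟩ hcd (he : s(a, b) = s(c, d))
    simp only [coe_sigma, Set.mem_sigma_iff, coe_univ, Set.mem_univ, mem_coe,
      mem_lowerNeighborFinset, true_and] at hab hcd
    rcases Sym2.eq_iff.mp he with ⟨rfl, rfl⟩ | ⟨rfl, rfl⟩
    · rfl
    · exact (hab.2.asymm hcd.2).elim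

lemma ncard_nonempty_add_ncard_one_lt_le :
    {u | (B.lowerNeighborFinset h u).Nonempty}.ncard
      + {u | 1 < #(B.lowerNeighborFinset h u)}.ncard ≤ B.edgeSet.ncard := by
  classical
  have hcount (n : ℕ) : (if 0 < n then 1 else 0) + (if 1 < n then 1 else 0) ≤ n := by
    split_ifs <;> omega
  simp only [← coe_filter_univ, Set.ncard_coe_finset, ← coe_edgeFinset, card_filter,
    ← card_pos]
  calc _ = ∑ u, ((if 0 < #(B.lowerNeighborFinset h u) then 1 else 0)
        + if 1 < #(B.lowerNeighborFinset h u) then 1 else 0) := sum_add_distrib.symm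
    _ ≤ ∑ u, #(B.lowerNeighborFinset h u) := sum_le_sum fun u _ => hcount _
    _ ≤ _ := sum_card_lowerNeighborFinset_le

end lowerNeighbors

end SimpleGraph

lemma MulAction.one_lt_ncard_of_even_ncard_orbit {H α : Type*} [Group H] [MulAction H α]
    {s : Set α} (hs : s.Finite) (hinv : ∀ g : H, Set.MapsTo (g • ·) s s) {x : α} (hx : x ∈ s)
    (heven : Even (orbit H x).ncard) : 1 < s.ncard := by
  have hsub : orbit H x ⊆ s := by
    rintro _ ⟨g, rfl⟩
    exact hinv g hx
  have hpos : 0 < (orbit H x).ncard :=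
    (Set.ncard_pos (hs.subset hsub)).mpr ⟨x, mem_orbit_self x⟩
  have hle := Set.ncard_le_ncard hsub hs
  obtain ⟨k, hk⟩ := heven
  omega

lemma IsPivot.one_lt_card_lowerNeighborFinset {V G α : Type*} [Fintype V] {B : SimpleGraph V}
    [DecidableRel B.Adj] [Group G] [MulAction G V] [LinearOrder α]
    (hact : ∀ (g : G) (a b : V), B.Adj a b → B.Adj (g • a) (g • b)) {h : V → α}
    (hh : ∀ (g : G) (y : V), h (g • y) = h y) {u : V} (hu : IsPivot B G u)
    (hne : (B.lowerNeighborFinset h u).Nonempty) : 1 < #(B.lowerNeighborFinset h u) := by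
  obtain ⟨y, hy⟩ := hne
  rw [← Set.ncard_coe_finset]
  refine MulAction.one_lt_ncard_of_even_ncard_orbit (H := MulAction.stabilizer G u)
    (finite_toSet _) (fun g z hz => ?_) hy (hu y (mem_lowerNeighborFinset.mp hy).1)
  obtain ⟨hadj, hlt⟩ := mem_lowerNeighborFinset.mp hz
  have hgu : (g : G) • u = u := g.2
  refine mem_lowerNeighborFinset.mpr ⟨?_, ?_⟩
  · simpa [Subgroup.smul_def, hgu] using hact g u z hadj
  · simpa [Subgroup.smul_def, hh] using hlt

/-- If a group `G` acts on a finite connected graph `B` by graph automorphisms, `W` is the set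
of `G`-pivot vertices and `v` is any vertex, then `|W \ Gv| ≤ β(B) + |Gv| - 1`. -/
theorem stmt_2 {V : Type*} [Fintype V] (B : SimpleGraph V)
    (G : Type*) [Group G] [MulAction G V]
    (hact : ∀ (g : G) (a b : V), B.Adj a b → B.Adj (g • a) (g • b))
    (hconn : B.Connected) (v : V) :
    (({w : V | IsPivot B G w} \ MulAction.orbit G v).ncard : ℤ)
      ≤ ((B.edgeSet.ncard : ℤ) - (Fintype.card V : ℤ) + 1)
          + ((MulAction.orbit G v).ncard : ℤ) - 1 := by
  classical
  set S := MulAction.orbit G v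
  set δ := B.setDist S
  have hδ : ∀ (g : G) (u : V), δ (g • u) = δ u :=
    hconn.setDist_smul hact (MulAction.mapsTo_smul_orbit · v)
  have hcompl : Sᶜ ⊆ {u | (B.lowerNeighborFinset δ u).Nonempty} := fun u hu =>
    have ⟨y, hy⟩ := hconn.exists_adj_setDist_lt ⟨v, MulAction.mem_orbit_self v⟩ hu
    ⟨y, mem_lowerNeighborFinset.mpr hy⟩
  have hpivot : {w | IsPivot B G w} \ S ⊆ {u | 1 < #(B.lowerNeighborFinset δ u)} :=
    fun u ⟨hpiv, hu⟩ => hpiv.one_lt_card_lowerNeighborFinset hact hδ (hcompl hu)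
  have hV := Set.ncard_add_ncard_compl S
  rw [Nat.card_eq_fintype_card] at hV
  have hcompl_le := Set.ncard_le_ncard hcompl
  have hpivot_le := Set.ncard_le_ncard hpivot
  have hedges := B.ncard_nonempty_add_ncard_one_lt_le (h := δ)
  omega
end

section
/- Let B be a finite connected graph with a group G acting by graph automorphisms, let W be the nonempty set of G-pivot vertices, and let d = min{|Gv| : v ∈ W}. Then the number of G-orbits contained in W is at most (β(B) - 1)/d + 2. -/
open SimpleGraph

/-!
Fix a pivot vertex `r` whose orbit has the minimal size `d`, and measure each vertex by the
distance from `r` to the nearest point of its orbit, a `G`-invariant quantity. Every orbit `A`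
other than `G r` contains a vertex `a` with a strictly lower neighbour `b`. All darts in the orbit
of `(a, b)` point downwards, so these dart orbits, for the various `A`, inject into disjoint sets
of edges. The orbit of `(a, b)` has `|A| * |G_a b|` elements, and `|G_a b|` is even, so at least
`2`, when `A` is an orbit of pivot vertices, in which case also `|A| ≥ d`. Summing over `A` gives
`|E| ≥ (|V| - d) + (N - 1) * d`, where `N` is the number of pivot orbits.
-/

open MulAction

namespace MulAction

variable {G α β : Type*} [Group G] [MulAction G α] [MulAction G β]

theorem ncard_orbit_prod (a : α) (b : β) :
    (orbit G (a, b)).ncard = (orbit G a).ncard * (orbit (stabilizer G a) b).ncard := by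
  have hle : stabilizer G (a, b) ≤ stabilizer G a := fun g hg => congrArg Prod.fst hg
  have hsub :
      (stabilizer G (a, b)).subgroupOf (stabilizer G a) = stabilizer (stabilizer G a) b := by
    ext ⟨g, hg⟩
    rw [mem_stabilizer_iff] at hg
    simp [Subgroup.mem_subgroupOf, mem_stabilizer_iff, hg]
  rw [← index_stabilizer, ← index_stabilizer, ← index_stabilizer,
    ← Subgroup.relIndex_mul_index hle, Subgroup.relIndex, hsub, mul_comm]

theorem ncard_orbit_stabilizer_smul [Finite α] (g : G) (a : α) (b : β) :
    (orbit (stabilizer G (g • a)) (g • b)).ncard = (orbit (stabilizer G a) b).ncard := by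
  have h := ncard_orbit_prod (G := G) (g • a) (g • b)
  rw [← Prod.smul_mk, orbit_smul, orbit_smul, ncard_orbit_prod] at h
  exact (Nat.eq_of_mul_eq_mul_left ((nonempty_orbit a).ncard_pos (Set.toFinite _)) h).symm

theorem ncard_orbit_le_ncard_orbit_prod [Finite β] (a : α) (b : β) :
    (orbit G a).ncard ≤ (orbit G (a, b)).ncard := by
  rw [ncard_orbit_prod]
  exact Nat.le_mul_of_pos_right _ ((nonempty_orbit b).ncard_pos (Set.toFinite _))

theorem card_eq_sum_ncard_orbit [Finite α] [Fintype (orbitRel.Quotient G α)] :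
    Nat.card α = ∑ ω : orbitRel.Quotient G α, ω.orbit.ncard := by
  rw [Nat.card_congr (selfEquivSigmaOrbits' G α), Nat.card_sigma]
  simp only [Nat.card_coe_set_eq]

theorem ncard_setOf_eq_orbit_eq_ncard_image (p : α → Prop) :
    {s : Set α | ∃ v, p v ∧ s = orbit G v}.ncard
      = (Quotient.mk'' '' {v | p v} : Set (orbitRel.Quotient G α)).ncard := by
  rw [← Set.ncard_image_of_injective _ orbitRel.Quotient.orbit_injective, Set.image_image]
  congr 1
  ext s
  simp [eq_comm]

end MulAction

namespace IsPivot

variable {V G : Type*} [Group G] [MulAction G V] [Finite V] {B : SimpleGraph V} {a b : V}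

theorem smul (hact : ∀ (g : G) (a b : V), B.Adj a b → B.Adj (g • a) (g • b))
    (ha : IsPivot B G a) (g : G) : IsPivot B G (g • a) := by
  intro w hw
  have hadj : B.Adj a (g⁻¹ • w) := by simpa using hact g⁻¹ _ _ hw
  rw [← smul_inv_smul g w, ncard_orbit_stabilizer_smul]
  exact ha _ hadj

theorem two_mul_ncard_orbit_le (ha : IsPivot B G a) (hab : B.Adj a b) :
    2 * (orbit G a).ncard ≤ (orbit G (a, b)).ncard := by
  have := Set.one_lt_ncard_of_nonempty_of_even (Set.toFinite _) (nonempty_orbit b) (ha b hab)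
  rw [ncard_orbit_prod, mul_comm 2]
  exact Nat.mul_le_mul_left _ this

theorem ncard_orbit_add_le_ncard_orbit_prod
    (hact : ∀ (g : G) (a b : V), B.Adj a b → B.Adj (g • a) (g • b)) {d : ℕ} {v : V}
    (hv : IsPivot B G v) (hd : d ≤ (orbit G v).ncard) (ha : a ∈ orbit G v) (hab : B.Adj a b) :
    (orbit G a).ncard + d ≤ (orbit G (a, b)).ncard := by
  obtain ⟨g, rfl⟩ := mem_orbit_iff.mp ha
  have := (hv.smul hact g).two_mul_ncard_orbit_le hab
  rw [orbit_smul] at *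
  omega

end IsPivot

namespace SimpleGraph

variable {V G : Type*} [Group G] [MulAction G V] (B : SimpleGraph V)

noncomputable def orbitDist (G : Type*) [Group G] [MulAction G V] (v r : V) : ℕ :=
  sInf (Set.range fun g : G => B.dist (g • v) r)

variable {B}

theorem orbitDist_smul (g : G) (v r : V) : B.orbitDist G (g • v) r = B.orbitDist G v r := by
  simp only [orbitDist, smul_smul]
  congr 1
  exact (Equiv.mulRight g).surjective.range_comp fun h => B.dist (h • v) r

theorem orbitDist_le_dist (v r : V) : B.orbitDist G v r ≤ B.dist v r :=
  Nat.sInf_le ⟨1, by simp⟩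

theorem Connected.exists_adj_orbitDist_lt (hconn : B.Connected) {r : V}
    {ω : orbitRel.Quotient G V} (hω : ω ≠ Quotient.mk'' r) :
    ∃ a ∈ ω.orbit, ∃ b, B.Adj a b ∧ B.orbitDist G b r < B.orbitDist G a r := by
  induction ω using Quotient.inductionOn' with | h v => ?_
  have hv : v ∉ orbit G r := fun h => hω (Quotient.sound' h)
  obtain ⟨g, hg⟩ : B.orbitDist G v r ∈ Set.range fun g : G => B.dist (g • v) r :=
    Nat.sInf_mem (Set.range_nonempty _)
  have hne : g • v ≠ r := fun h => hv (mem_orbit_symm.mpr ⟨g, h⟩)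
  obtain ⟨p, hp⟩ := hconn.exists_walk_length_eq_dist (g • v) r
  cases p with
  | nil => exact absurd rfl hne
  | @cons _ b _ hadj q =>
    refine ⟨g • v, mem_orbit v g, b, hadj, ?_⟩
    rw [orbitDist_smul, ← hg]
    calc B.orbitDist G b r ≤ B.dist b r := orbitDist_le_dist b r
      _ ≤ q.length := dist_le q
      _ < B.dist (g • v) r := by rw [← hp, Walk.length_cons]; omega

theorem sum_ncard_orbit_le_ncard_edgeSet [Finite V] {ι : Type*} [Fintype ι]
    (hact : ∀ (g : G) (a b : V), B.Adj a b → B.Adj (g • a) (g • b))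
    {f : V → ℕ} (hf : ∀ (g : G) v, f (g • v) = f v) {p : ι → V × V}
    (hadj : ∀ i, B.Adj (p i).1 (p i).2) (hlt : ∀ i, f (p i).2 < f (p i).1)
    (hinj : Function.Injective fun i => orbit G (p i).1) :
    ∑ i, (orbit G (p i)).ncard ≤ B.edgeSet.ncard := by
  have hdesc : ∀ i, ∀ x ∈ orbit G (p i),
      x.1 ∈ orbit G (p i).1 ∧ B.Adj x.1 x.2 ∧ f x.2 < f x.1 := by
    rintro i _ ⟨g, rfl⟩
    exact ⟨mem_orbit _ g, hact g _ _ (hadj i),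
      by simpa only [Prod.smul_fst, Prod.smul_snd, hf] using hlt i⟩
  let e : (Σ i, orbit G (p i)) → B.edgeSet := fun x =>
    ⟨s(x.2.1.1, x.2.1.2), (hdesc x.1 x.2 x.2.2).2.1⟩
  have he : Function.Injective e := by
    rintro ⟨i, x, hx⟩ ⟨j, y, hy⟩ hxy
    obtain ⟨hxi, -, hx⟩ := hdesc i x hx
    obtain ⟨hyj, -, hy⟩ := hdesc j y hy
    have hs : s(x.1, x.2) = s(y.1, y.2) := congrArg Subtype.val hxy
    -- an edge has at most one orientation along which `f` decreases
    obtain rfl : x = y := by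
      rcases Sym2.eq_iff.mp hs with ⟨h1, h2⟩ | ⟨h1, h2⟩
      · exact Prod.ext h1 h2
      · rw [h1, h2] at hx
        omega
    obtain rfl : i = j := hinj ((orbit_eq_iff.mpr hxi).symm.trans (orbit_eq_iff.mpr hyj))
    rfl
  calc ∑ i, (orbit G (p i)).ncard = Nat.card (Σ i, orbit G (p i)) := by
        simp only [Nat.card_sigma, Nat.card_coe_set_eq]
    _ ≤ Nat.card B.edgeSet := Nat.card_le_card_of_injective e he
    _ = B.edgeSet.ncard := Nat.card_coe_set_eq _

def pivotOrbits (B : SimpleGraph V) (G : Type*) [Group G] [MulAction G V] :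
    Set (orbitRel.Quotient G V) :=
  Quotient.mk'' '' {v | IsPivot B G v}

theorem Connected.sum_ncard_orbit_add_indicator_le_ncard_edgeSet [Finite V]
    [Fintype (orbitRel.Quotient G V)] [DecidableEq (orbitRel.Quotient G V)]
    (hact : ∀ (g : G) (a b : V), B.Adj a b → B.Adj (g • a) (g • b)) (hconn : B.Connected)
    {d : ℕ} (hd : ∀ v, IsPivot B G v → d ≤ (orbit G v).ncard) (r : V) :
    ∑ ω ∈ (Finset.univ : Finset (orbitRel.Quotient G V)).erase (Quotient.mk'' r),
      (ω.orbit.ncard + (pivotOrbits B G).indicator (fun _ => d) ω) ≤ B.edgeSet.ncard := by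
  choose a ha b hab hlt using
    fun ω : (Finset.univ : Finset (orbitRel.Quotient G V)).erase (Quotient.mk'' r) =>
    hconn.exists_adj_orbitDist_lt (Finset.ne_of_mem_erase ω.2)
  have horbit : ∀ ω, orbit G (a ω) = ω.1.orbit := fun ω => by
    rw [← orbitRel.Quotient.mem_orbit.mp (ha ω)]
    rfl
  have hinj : Function.Injective fun ω => orbit G (a ω, b ω).1 := fun ω ω' h =>
    Subtype.ext (orbitRel.Quotient.orbit_injective (by simpa only [horbit] using h))
  rw [← Finset.sum_coe_sort]
  calc _ ≤ ∑ ω, (orbit G (a ω, b ω)).ncard := Finset.sum_le_sum fun ω _ => by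
        rw [← horbit]
        by_cases hω : ω.1 ∈ pivotOrbits B G
        · obtain ⟨v, hv, hvω⟩ := hω
          have hav : a ω ∈ orbit G v := by
            simpa only [← hvω, orbitRel.Quotient.orbit_mk] using ha ω
          rw [Set.indicator_of_mem (show ω.1 ∈ pivotOrbits B G from ⟨v, hv, hvω⟩)]
          exact hv.ncard_orbit_add_le_ncard_orbit_prod hact (hd v hv) hav (hab ω)
        · rw [Set.indicator_of_notMem hω, add_zero]
          exact ncard_orbit_le_ncard_orbit_prod (a ω) (b ω)
    _ ≤ B.edgeSet.ncard := sum_ncard_orbit_le_ncard_edgeSet hact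
        (f := fun v => B.orbitDist G v r) (fun g v => orbitDist_smul g v r) hab hlt hinj

end SimpleGraph

theorem stmt_4_general {V : Type*} [Fintype V] (B : SimpleGraph V)
    (G : Type*) [Group G] [MulAction G V]
    (hact : ∀ (g : G) (a b : V), B.Adj a b → B.Adj (g • a) (g • b))
    (hconn : B.Connected)
    (d : ℕ)
    (hd : IsLeast {n : ℕ | ∃ v : V, IsPivot B G v ∧ n = (MulAction.orbit G v).ncard} d) :
    (d : ℤ) * ({s : Set V | ∃ v : V, IsPivot B G v ∧ s = MulAction.orbit G v}.ncard : ℤ)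
      ≤ (((B.edgeSet.ncard : ℤ) - (Fintype.card V : ℤ) + 1) - 1) + 2 * (d : ℤ) := by
  classical
  obtain ⟨r, hr, hrd⟩ := hd.1
  set weight : orbitRel.Quotient G V → ℕ := fun ω =>
    ω.orbit.ncard + (B.pivotOrbits G).indicator (fun _ => d) ω
  have hroot : weight (Quotient.mk'' r) = 2 * d := by
    have hrP : Quotient.mk'' r ∈ B.pivotOrbits G := ⟨r, hr, rfl⟩
    simp only [weight, Set.indicator_of_mem hrP, orbitRel.Quotient.orbit_mk, ← hrd, two_mul]
  have htotal : ∑ ω, weight ω = Fintype.card V + (B.pivotOrbits G).ncard * d := by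
    rw [Finset.sum_add_distrib, ← card_eq_sum_ncard_orbit (G := G), Nat.card_eq_fintype_card,
      Finset.sum_indicator_eq_sum_filter, Finset.sum_const, smul_eq_mul,
      Set.filter_mem_univ_eq_toFinset, ← Set.ncard_eq_toFinset_card']
  have hrest : ∑ ω ∈ Finset.univ.erase (Quotient.mk'' r), weight ω ≤ B.edgeSet.ncard :=
    hconn.sum_ncard_orbit_add_indicator_le_ncard_edgeSet hact (fun v hv => hd.2 ⟨v, hv, rfl⟩) r
  have hN : {s : Set V | ∃ v : V, IsPivot B G v ∧ s = orbit G v}.ncard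
      = (B.pivotOrbits G).ncard := ncard_setOf_eq_orbit_eq_ncard_image _
  have hsplit := Finset.add_sum_erase Finset.univ weight (Finset.mem_univ (Quotient.mk'' r))
  rw [hN]
  zify at *
  linarith

/-- If a group `G` acts on a finite connected graph `B` by graph automorphisms, the set `W` of
`G`-pivot vertices is nonempty, and `d = min {|Gv| : v ∈ W}`, then the number `N` of `G`-orbits
contained in `W` satisfies `d * N ≤ (β(B) - 1) + 2 * d`. -/
theorem stmt_4 {V : Type*} [Fintype V] (B : SimpleGraph V)
    (G : Type*) [Group G] [MulAction G V]
    (hact : ∀ (g : G) (a b : V), B.Adj a b → B.Adj (g • a) (g • b))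
    (hconn : B.Connected)
    (hW : {v : V | IsPivot B G v}.Nonempty)
    (d : ℕ)
    (hd : IsLeast {n : ℕ | ∃ v : V, IsPivot B G v ∧ n = (MulAction.orbit G v).ncard} d) :
    (d : ℤ) * ({s : Set V | ∃ v : V, IsPivot B G v ∧ s = MulAction.orbit G v}.ncard : ℤ)
      ≤ (((B.edgeSet.ncard : ℤ) - (Fintype.card V : ℤ) + 1) - 1) + 2 * (d : ℤ) :=
  stmt_4_general B G hact hconn d hd
end

section
/- Let B be a finite connected graph and G a group acting on B by graph automorphisms. Then the number of G-orbits of G-pivot vertices of B is at most β(B) + 1. -/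
/-!
Let `R` be a smallest orbit of pivot vertices; the graph distance to `R` is `G`-invariant. Every vertex outside `R` has a neighbour closer to `R`, and a pivot vertex `v` has
at least two: the stabilizer of `v` permutes the closer neighbours, and the stabilizer-orbit of one
of them has even, hence at least two, elements. Counting every edge at its endpoint farther from
`R` gives `|E| ≥ |V| - |R| + #(pivots outside R) ≥ |V| - |R| + (k - 1)|R|` for `k ≥ 2` pivot
orbits, i.e. `k ≤ β(B) + 1`; for `k ≤ 1` this is `|E| ≥ |V| - 1`.
-/

open SimpleGraph

open Finset MulAction
open scoped Pointwise

namespace SimpleGraph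

variable {V : Type*} {B : SimpleGraph V}

variable (B) in
/-- Since `sInf ∅ = 0`, this is the distance from `v` to `R` only when `R` is reachable from `v`. -/
noncomputable def distToSet (R : Set V) (v : V) : ℕ :=
  sInf {n | ∃ u ∈ R, ∃ p : B.Walk v u, p.length = n}

lemma distToSet_le {R : Set V} {u v : V} (hu : u ∈ R) (p : B.Walk v u) :
    B.distToSet R v ≤ p.length :=
  Nat.sInf_le ⟨u, hu, p, rfl⟩

lemma Connected.exists_walk_length_eq_distToSet (hB : B.Connected) {R : Set V} (hR : R.Nonempty)
    (v : V) : ∃ u ∈ R, ∃ p : B.Walk v u, p.length = B.distToSet R v := by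
  obtain ⟨u, hu⟩ := hR
  exact Nat.sInf_mem (s := {n | ∃ u ∈ R, ∃ p : B.Walk v u, p.length = n})
    ⟨_, u, hu, (hB v u).some, rfl⟩

lemma Connected.exists_adj_distToSet_lt (hB : B.Connected) {R : Set V} (hR : R.Nonempty) {v : V}
    (hv : v ∉ R) : ∃ w, B.Adj v w ∧ B.distToSet R w < B.distToSet R v := by
  obtain ⟨u, hu, p, hp⟩ := hB.exists_walk_length_eq_distToSet hR v
  cases p with
  | nil => exact absurd hu hv
  | cons hvw q => exact ⟨_, hvw, (distToSet_le hu q).trans_lt (by simp [← hp])⟩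

lemma Connected.distToSet_map_le (hB : B.Connected) {R : Set V} (hR : R.Nonempty) (f : B →g B)
    (hf : Set.MapsTo f R R) (v : V) : B.distToSet R (f v) ≤ B.distToSet R v := by
  obtain ⟨u, hu, p, hp⟩ := hB.exists_walk_length_eq_distToSet hR v
  simpa [hp] using distToSet_le (hf hu) (p.map f)

variable [Fintype V] [DecidableRel B.Adj]

variable (B) in
def downDegree (h : V → ℕ) (v : V) : ℕ := #{w | B.Adj v w ∧ h w < h v}

lemma sum_downDegree_le_card_edgeFinset (h : V → ℕ) :
    ∑ v, B.downDegree h v ≤ #B.edgeFinset := by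
  simp only [downDegree]
  rw [← card_sigma]
  refine card_le_card_of_injOn (fun x => s(x.1, x.2)) ?_ ?_
  · rintro ⟨v, w⟩ hvw
    rw [mem_coe, mem_sigma, mem_filter] at hvw
    exact mem_coe.2 (mem_edgeFinset.2 hvw.2.2.1)
  · rintro ⟨v, w⟩ hvw ⟨v', w'⟩ hvw' heq
    rw [mem_coe, mem_sigma, mem_filter] at hvw hvw'
    dsimp only at hvw hvw' heq
    rcases Sym2.eq_iff.mp heq with ⟨rfl, rfl⟩ | ⟨rfl, rfl⟩
    · rfl
    · omega

lemma card_add_card_le_card_edgeFinset_add_card [DecidableEq V] (h : V → ℕ) {R Q : Finset V}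
    (hQR : Disjoint Q R) (hdown : ∀ v ∉ R, 1 ≤ B.downDegree h v)
    (hdown₂ : ∀ v ∈ Q, 2 ≤ B.downDegree h v) :
    Fintype.card V + #Q ≤ #B.edgeFinset + #R := by
  have hQ : Q ⊆ Rᶜ := fun v hv => mem_compl.2 (Finset.disjoint_left.1 hQR hv)
  calc Fintype.card V + #Q = #(Rᶜ \ Q) • 1 + #Q • 2 + #R := by
        rw [card_sdiff_of_subset hQ, card_compl, smul_eq_mul, smul_eq_mul]
        have := card_le_card hQ
        have := card_le_univ R
        rw [card_compl] at *
        omega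
    _ ≤ ∑ v ∈ Rᶜ \ Q, B.downDegree h v + ∑ v ∈ Q, B.downDegree h v + #R := by
        gcongr
        · exact card_nsmul_le_sum _ _ _ fun v hv => hdown v (mem_compl.1 (mem_sdiff.1 hv).1)
        · exact card_nsmul_le_sum _ _ _ hdown₂
    _ = ∑ v ∈ Rᶜ, B.downDegree h v + #R := by rw [sum_sdiff hQ]
    _ ≤ ∑ v, B.downDegree h v + #R := by gcongr; exact subset_univ _
    _ ≤ #B.edgeFinset + #R := by gcongr; exact B.sum_downDegree_le_card_edgeFinset h

end SimpleGraph

lemma MulAction.orbit_stabilizer_smul_smul {G V : Type*} [Group G] [MulAction G V] (g : G)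
    (v w : V) : orbit (stabilizer G (g • v)) (g • w) = g • orbit (stabilizer G v) w := by
  ext x
  simp only [Set.mem_smul_set_iff_inv_smul_mem, mem_orbit_iff, Subtype.exists, Subgroup.mk_smul,
    mem_stabilizer_iff]
  constructor
  · rintro ⟨s, hs, rfl⟩
    exact ⟨g⁻¹ * s * g, by simp [mul_smul, hs], by simp [mul_smul]⟩
  · rintro ⟨s, hs, hx⟩
    exact ⟨g * s * g⁻¹, by simp [mul_smul, hs], by simp [mul_smul, hx]⟩

lemma MulAction.mul_card_image_orbit_le_card {G V : Type*} [Group G] [MulAction G V]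
    [DecidableEq (Set V)] {S : Finset V} (hS : ∀ (g : G), ∀ v ∈ S, g • v ∈ S) {m : ℕ}
    (hm : ∀ v ∈ S, m ≤ (orbit G v).ncard) : m * #(S.image (orbit G)) ≤ #S := by
  refine mul_card_image_le_card S m fun O hO => ?_
  obtain ⟨v, hv, rfl⟩ := mem_image.1 hO
  refine (hm v hv).trans ?_
  rw [← Set.ncard_coe_finset]
  refine Set.ncard_le_ncard ?_ (Finset.finite_toSet _)
  rintro _ ⟨g, rfl⟩
  simp only [coe_filter, Set.mem_ofPred_eq]
  exact ⟨hS g v hv, orbit_smul g v⟩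

section Pivot

variable {V G : Type*} [Group G] [MulAction G V] {B : SimpleGraph V}
  (hact : ∀ (g : G) (a b : V), B.Adj a b → B.Adj (g • a) (g • b))
include hact

lemma IsPivot.smul_s5 {v : V} (hv : IsPivot B G v) (g : G) : IsPivot B G (g • v) := by
  intro w hw
  rw [← smul_inv_smul g w, orbit_stabilizer_smul_smul, Set.ncard_smul_set]
  exact hv _ (by simpa using hact g⁻¹ _ _ hw)

lemma IsPivot.two_le_downDegree [Fintype V] [DecidableRel B.Adj] {h : V → ℕ}
    (h_smul_le : ∀ (g : G) v, h (g • v) ≤ h v) {v w : V} (hv : IsPivot B G v) (hvw : B.Adj v w)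
    (hw : h w < h v) : 2 ≤ B.downDegree h v := by
  set O := orbit (stabilizer G v) w
  have hO : 2 ≤ O.ncard := by
    obtain ⟨k, hk⟩ := hv w hvw
    change O.ncard = k + k at hk
    have := (Set.ncard_pos O.toFinite).2 ⟨w, mem_orbit_self w⟩
    omega
  refine hO.trans ?_
  rw [downDegree, ← Set.ncard_coe_finset]
  refine Set.ncard_le_ncard ?_ (Finset.finite_toSet _)
  rintro _ ⟨⟨s, hs⟩, rfl⟩
  have hsv : s • v = v := hs
  simpa [hsv] using And.intro (hsv ▸ hact s v w hvw) ((h_smul_le s w).trans_lt hw)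

end Pivot

lemma MulAction.card_orbit_mul_card_image_orbit_sub_one_le {G V : Type*} [Group G]
    [MulAction G V] [DecidableEq (Set V)] {S : Finset V} (hS : ∀ (g : G), ∀ v ∈ S, g • v ∈ S)
    {r : V} [DecidablePred (· ∈ orbit G r)] (hr : ∀ v ∈ S, (orbit G r).ncard ≤ (orbit G v).ncard) :
    (orbit G r).ncard * (#(S.image (orbit G)) - 1) ≤ #{v ∈ S | v ∉ orbit G r} := by
  have hsmul_mem (g : G) (v : V) : g • v ∈ orbit G r ↔ v ∈ orbit G r := by
    rw [← orbit_eq_iff, orbit_smul, orbit_eq_iff]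
  have hcard : #(S.image (orbit G)) - 1 ≤ #({v ∈ S | v ∉ orbit G r}.image (orbit G)) := by
    refine (pred_card_le_card_erase (a := orbit G r)).trans (card_le_card fun O hO => ?_)
    obtain ⟨hOr, v, hv, rfl⟩ : O ≠ orbit G r ∧ ∃ v ∈ S, orbit G v = O := by simpa using hO
    exact mem_image.2 ⟨v, mem_filter.2 ⟨hv, fun h => hOr (orbit_eq_iff.2 h)⟩, rfl⟩
  refine (Nat.mul_le_mul_left _ hcard).trans (mul_card_image_orbit_le_card ?_ ?_)
  · intro g v hv
    simp only [mem_filter, hsmul_mem] at hv ⊢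
    exact ⟨hS g v hv.1, hv.2⟩
  · exact fun v hv => hr v (mem_filter.1 hv).1

lemma card_add_card_le_of_isPivot {V G : Type*} [Group G] [MulAction G V] {B : SimpleGraph V}
    [Fintype V] [DecidableRel B.Adj]
    (hact : ∀ (g : G) (a b : V), B.Adj a b → B.Adj (g • a) (g • b)) (hB : B.Connected)
    (r : V) {Q : Finset V} (hQ : ∀ v ∈ Q, IsPivot B G v ∧ v ∉ orbit G r) :
    Fintype.card V + #Q ≤ #B.edgeFinset + (orbit G r).ncard := by
  classical
  have hne : (orbit G r).Nonempty := ⟨r, mem_orbit_self r⟩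
  have hdist (g : G) (v : V) :
      B.distToSet (orbit G r) (g • v) ≤ B.distToSet (orbit G r) v :=
    hB.distToSet_map_le hne ⟨(g • ·), hact g _ _⟩ (mapsTo_smul_orbit g r) v
  have hR : (orbit G r).ncard = #{v | v ∈ orbit G r} := by
    rw [← Set.ncard_coe_finset, coe_filter_univ, Set.ofPred_mem_eq]
  rw [hR]
  refine B.card_add_card_le_card_edgeFinset_add_card (B.distToSet (orbit G r))
    (Finset.disjoint_left.2 fun v hv => by simpa using (hQ v hv).2) (fun v hv => ?_) (fun v hv => ?_)
  · obtain ⟨w, hvw, hlt⟩ := hB.exists_adj_distToSet_lt hne (by simpa using hv)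
    exact card_pos.2 ⟨w, by simp [hvw, hlt]⟩
  · obtain ⟨w, hvw, hlt⟩ := hB.exists_adj_distToSet_lt hne (hQ v hv).2
    exact (hQ v hv).1.two_le_downDegree hact hdist hvw hlt

/-- If a group `G` acts on a finite connected graph `B` by graph automorphisms, then the number
of `G`-orbits of `G`-pivot vertices is at most `β(B) + 1`. -/
theorem stmt_5 {V : Type*} [Fintype V] (B : SimpleGraph V)
    (G : Type*) [Group G] [MulAction G V]
    (hact : ∀ (g : G) (a b : V), B.Adj a b → B.Adj (g • a) (g • b))
    (hconn : B.Connected) :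
    ({s : Set V | ∃ v : V, IsPivot B G v ∧ s = MulAction.orbit G v}.ncard : ℤ)
      ≤ ((B.edgeSet.ncard : ℤ) - (Fintype.card V : ℤ) + 1) + 1 := by
  classical
  set P : Finset V := {v | IsPivot B G v}
  have hcount : {s : Set V | ∃ v, IsPivot B G v ∧ s = orbit G v}.ncard = #(P.image (orbit G)) := by
    rw [← Set.ncard_coe_finset]
    congr 1
    ext s
    simp [P, eq_comm]
  have hE : B.edgeSet.ncard = #B.edgeFinset := by rw [← coe_edgeFinset, Set.ncard_coe_finset]
  rw [hcount, hE]
  suffices #(P.image (orbit G)) + Fintype.card V ≤ #B.edgeFinset + 2 by omega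
  obtain hk | hk := le_or_gt #(P.image (orbit G)) 1
  · have := hconn.card_vert_le_card_edgeSet_add_one
    rw [Nat.card_eq_fintype_card, Nat.card_coe_set_eq, hE] at this
    omega
  obtain ⟨r, -, hmin⟩ := P.exists_min_image (fun v => (orbit G v).ncard)
    (by simpa using card_pos.1 (by omega : 0 < #(P.image (orbit G))))
  have horbits := card_orbit_mul_card_image_orbit_sub_one_le
    (fun g v hv => by simpa [P] using (mem_filter.1 hv).2.smul_s5 hact g) hmin
  have hgraph := card_add_card_le_of_isPivot hact hconn r (Q := {v ∈ P | v ∉ orbit G r})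
    (fun v hv => by simpa [P] using hv)
  have hr : 1 ≤ (orbit G r).ncard := (Set.ncard_pos (Set.toFinite _)).2 ⟨r, mem_orbit_self r⟩
  obtain ⟨j, hj⟩ : ∃ j, #(P.image (orbit G)) = j + 2 := ⟨_, (Nat.sub_add_cancel hk).symm⟩
  rw [hj, show j + 2 - 1 = j + 1 by omega] at horbits
  rw [hj]
  nlinarith [Nat.mul_le_mul_right j hr]
end

section
/- Let B be a finite connected graph with β(B) ≥ 2 and let G be a group acting on B by graph automorphisms. Then the number of G-pivot vertices of B is at most 3(β(B) - 1). -/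
/-!
Pivots have even degree, since the orbits of the stabilizer partition the neighbourhood; in
particular no pivot is a leaf. Deleting all leaves at once keeps the graph connected, keeps `β`
(each leaf takes one edge with it, and two leaves are never adjacent when `β ≥ 2`), and keeps
every pivot a pivot, so by induction on the number of vertices we may assume minimum degree two.

Then let `f` be the distance to the nonempty set of vertices of degree `≠ 2`. A vertex of degree
two has a neighbour one step closer, so among its two neighbours at most one is one step farther;
at a pivot of degree two the stabilizer swaps the two neighbours, so both are one step closer.
Hence `2 [v is a pivot] + #up(v) ≤ #down(v) + 3 (deg v - 2)` at every vertex, and summing over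
all vertices, with `∑ #up = ∑ #down` and `∑ (deg v - 2) = 2 (β - 1)`, gives the bound.
-/

open SimpleGraph

open Finset MulAction

theorem Finset.even_card_of_even_ncard_orbit {H α : Type*} [Group H] [MulAction H α]
    (S : Finset α) (hS : ∀ (h : H), ∀ a ∈ S, h • a ∈ S)
    (heven : ∀ a ∈ S, Even (orbit H a).ncard) : Even #S := by
  classical
  rw [card_eq_sum_card_fiberwise fun a ha ↦ mem_image_of_mem (Quotient.mk (orbitRel H α)) ha]
  refine even_sum _ fun ω hω ↦ ?_
  obtain ⟨a, ha, rfl⟩ := mem_image.1 hω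
  have hfiber : (↑{x ∈ S | ⟦x⟧ = (⟦a⟧ : Quotient (orbitRel H α))} : Set α) = orbit H a := by
    ext x
    simp only [coe_filter, Set.mem_ofPred_eq, Quotient.eq, orbitRel_apply]
    refine ⟨And.right, fun hx ↦ ⟨?_, hx⟩⟩
    obtain ⟨h, rfl⟩ := hx
    exact hS h a ha
  rw [← Set.ncard_coe_finset, hfiber]
  exact heven a ha

namespace SimpleGraph

variable {V G : Type*} [Group G] [MulAction G V]

def IsAutAction (B : SimpleGraph V) (G : Type*) [Group G] [MulAction G V] : Prop :=
  ∀ (g : G) (a b : V), B.Adj a b → B.Adj (g • a) (g • b)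

noncomputable def bettiNumber (B : SimpleGraph V) : ℤ := B.edgeSet.ncard - Nat.card V + 1

-- `sInf ∅ = 0`: this is `0` when `T` is empty.
noncomputable def infDist (B : SimpleGraph V) (T : Set V) (x : V) : ℕ := sInf (B.dist x '' T)

def downNeighborFinset (B : SimpleGraph V) [Fintype V] [DecidableRel B.Adj] (f : V → ℕ)
    (x : V) : Finset V :=
  {y ∈ B.neighborFinset x | f y + 1 = f x}

def upNeighborFinset (B : SimpleGraph V) [Fintype V] [DecidableRel B.Adj] (f : V → ℕ)
    (x : V) : Finset V :=
  {y ∈ B.neighborFinset x | f x + 1 = f y}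

variable {B : SimpleGraph V}

theorem IsAutAction.adj_smul_iff (hact : B.IsAutAction G) (g : G) (a b : V) :
    B.Adj (g • a) (g • b) ↔ B.Adj a b :=
  ⟨fun h ↦ by simpa using hact g⁻¹ _ _ h, hact g a b⟩

theorem IsAutAction.induce (hact : B.IsAutAction G) (p : SubMulAction G V) :
    (B.induce (p : Set V)).IsAutAction G :=
  fun g a b h ↦ hact g a b h

section Distance

variable {T : Set V} {x : V}

theorem IsAutAction.dist_smul (hact : B.IsAutAction G) (hconn : B.Connected) (g : G) (a b : V) :
    B.dist (g • a) (g • b) = B.dist a b := by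
  have hle (g : G) (a b : V) : B.dist (g • a) (g • b) ≤ B.dist a b := by
    obtain ⟨p, hp⟩ := hconn.exists_walk_length_eq_dist a b
    exact hp ▸ p.length_map ⟨(g • ·), hact g _ _⟩ ▸ dist_le _
  refine (hle g a b).antisymm ?_
  simpa using hle g⁻¹ (g • a) (g • b)

theorem infDist_le {t : V} (ht : t ∈ T) : B.infDist T x ≤ B.dist x t :=
  Nat.sInf_le ⟨t, ht, rfl⟩

theorem exists_dist_eq_infDist (hT : T.Nonempty) : ∃ t ∈ T, B.dist x t = B.infDist T x :=
  Nat.sInf_mem (hT.image _)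

theorem Connected.exists_adj_infDist_add_one (hconn : B.Connected) (hT : T.Nonempty)
    (hx : x ∉ T) : ∃ y, B.Adj x y ∧ B.infDist T y + 1 = B.infDist T x := by
  obtain ⟨t, ht, hxt⟩ := exists_dist_eq_infDist (B := B) (x := x) hT
  obtain ⟨p, hp⟩ := hconn.exists_walk_length_eq_dist x t
  cases p with
  | nil => exact absurd ht hx
  | @cons _ y _ hxy q =>
    refine ⟨y, hxy, le_antisymm ?_ ?_⟩
    · have := (infDist_le (x := y) ht).trans (dist_le q)
      rw [Walk.length_cons] at hp
      omega
    · obtain ⟨t', ht', hyt'⟩ := exists_dist_eq_infDist (B := B) (x := y) hT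
      calc B.infDist T x ≤ B.dist x t' := infDist_le ht'
        _ ≤ B.dist x y + B.dist y t' := hconn.dist_triangle
        _ = B.infDist T y + 1 := by rw [dist_eq_one_iff_adj.2 hxy, hyt', add_comm]

theorem IsAutAction.infDist_smul (hact : B.IsAutAction G) (hconn : B.Connected)
    (hT : ∀ (g : G), ∀ t ∈ T, g • t ∈ T) (g : G) (x : V) :
    B.infDist T (g • x) = B.infDist T x := by
  rcases T.eq_empty_or_nonempty with rfl | hne
  · simp [infDist]
  have hle (g : G) (x : V) : B.infDist T (g • x) ≤ B.infDist T x := by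
    obtain ⟨t, ht, hxt⟩ := exists_dist_eq_infDist (B := B) (x := x) hne
    exact hxt ▸ hact.dist_smul hconn g x t ▸ infDist_le (hT g t ht)
  refine (hle g x).antisymm ?_
  simpa using hle g⁻¹ (g • x)

end Distance

section Degree

variable [Fintype V] [DecidableRel B.Adj]

theorem IsAutAction.degree_smul (hact : B.IsAutAction G) (g : G) (a : V) :
    B.degree (g • a) = B.degree a := by
  have : B.neighborFinset (g • a) = (B.neighborFinset a).map (MulAction.toPerm g).toEmbedding := by
    ext x
    simp only [mem_map, mem_neighborFinset, Equiv.toEmbedding_apply, MulAction.toPerm_apply]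
    refine ⟨fun h ↦ ⟨g⁻¹ • x, ?_, smul_inv_smul g x⟩, fun ⟨y, hy, hyx⟩ ↦ hyx ▸ hact g _ _ hy⟩
    rwa [← hact.adj_smul_iff g, smul_inv_smul]
  rw [← card_neighborFinset_eq_degree, ← card_neighborFinset_eq_degree, this, card_map]

theorem sum_card_downNeighborFinset (f : V → ℕ) :
    ∑ x, #(B.downNeighborFinset f x) = ∑ x, #(B.upNeighborFinset f x) := by
  have h := sum_card_bipartiteAbove_eq_sum_card_bipartiteBelow (s := univ) (t := univ)
    fun x y ↦ B.Adj x y ∧ f y + 1 = f x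
  convert h using 3 with x _ y _
  · ext y; simp [downNeighborFinset, bipartiteAbove]
  · ext z; simp [upNeighborFinset, bipartiteBelow, adj_comm]

theorem card_downNeighborFinset_add_card_upNeighborFinset_le (f : V → ℕ) (x : V) :
    #(B.downNeighborFinset f x) + #(B.upNeighborFinset f x) ≤ B.degree x := by
  rw [← card_neighborFinset_eq_degree,
    ← card_filter_add_card_filter_not (s := B.neighborFinset x) (fun y ↦ f y + 1 = f x)]
  exact Nat.add_le_add_left (card_le_card <| monotone_filter_right _ fun y _ _ ↦ by omega) _

theorem sum_degree_sub_two : ∑ v, ((B.degree v : ℤ) - 2) = 2 * (B.bettiNumber - 1) := by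
  rw [sum_sub_distrib, ← Nat.cast_sum, sum_degrees_eq_twice_card_edges, bettiNumber,
    ← coe_edgeFinset, Set.ncard_coe_finset, Nat.card_eq_fintype_card]
  simp only [sum_const, card_univ, nsmul_eq_mul]
  push_cast
  ring

theorem exists_two_lt_degree (hβ : 2 ≤ B.bettiNumber) : ∃ v, 2 < B.degree v := by
  by_contra! h
  have : ∑ v, ((B.degree v : ℤ) - 2) ≤ 0 := sum_nonpos fun v _ ↦ by have := h v; omega
  linarith [sum_degree_sub_two (B := B)]

theorem bettiNumber_induce_of_pendant {s : Set V} (hdeg : ∀ v ∉ s, B.degree v = 1)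
    (hadj : ∀ v w, v ∉ s → B.Adj v w → w ∈ s) :
    (B.induce s).bettiNumber = B.bettiNumber := by
  classical
  have hpend : B.edgeFinset \ s.toFinset.sym2 = sᶜ.toFinset.biUnion (B.incidenceFinset ·) := by
    ext e
    induction e using Sym2.ind with
    | _ a b =>
      simp only [mem_sdiff, mem_edgeFinset, mem_edgeSet, Finset.mk_mem_sym2_iff, Set.mem_toFinset,
        mem_biUnion, Set.mem_compl_iff, mem_incidenceFinset, mk'_mem_incidenceSet_iff]
      grind
  have hdisj : (sᶜ.toFinset : Set V).PairwiseDisjoint (B.incidenceFinset ·) := by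
    intro ℓ hℓ ℓ' hℓ' hne
    refine Finset.disjoint_left.2 fun e he he' ↦ ?_
    simp only [Set.coe_toFinset, Set.mem_compl_iff] at hℓ hℓ'
    exact hℓ' <| hadj ℓ ℓ' hℓ <|
      B.adj_of_mem_incidenceSet hne (by simpa using he) (by simpa using he')
  have hedges : (B.induce s).edgeSet.ncard + #sᶜ.toFinset = #B.edgeFinset := by
    rw [← coe_edgeFinset, Set.ncard_coe_finset, ← card_map, map_edgeFinset_induce,
      ← card_inter_add_card_sdiff B.edgeFinset s.toFinset.sym2, hpend, card_biUnion hdisj,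
      sum_congr rfl fun ℓ hℓ ↦ by rw [card_incidenceFinset_eq_degree, hdeg ℓ (by simpa using hℓ)]]
    simp
  have hverts := Set.ncard_add_ncard_compl s
  rw [Set.ncard_eq_toFinset_card' sᶜ] at hverts
  rw [bettiNumber, bettiNumber, Nat.card_coe_set_eq, ← coe_edgeFinset B, Set.ncard_coe_finset]
  omega

theorem subsingleton_neighborSet_of_degree_le_one {v : V} (hv : B.degree v ≤ 1) :
    (B.neighborSet v).Subsingleton := by
  rw [← coe_neighborFinset]
  exact Finset.card_le_one_iff_subsingleton.1 (by rwa [B.card_neighborFinset_eq_degree v])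

theorem Connected.eq_or_eq_of_adj_of_degree_le_one (hconn : B.Connected) {a b : V}
    (hab : B.Adj a b) (ha : B.degree a ≤ 1) (hb : B.degree b ≤ 1) (c : V) : c = a ∨ c = b := by
  by_contra! hc
  obtain ⟨p, hp⟩ := hconn.exists_isPath a c
  have hsnd : p.snd = b :=
    subsingleton_neighborSet_of_degree_le_one ha (p.adj_snd (Walk.not_nil_of_ne hc.1.symm)) hab
  exact hp.isTrail.not_mem_support_of_subsingleton_neighborSet hab.ne' hc.2.symm
    (subsingleton_neighborSet_of_degree_le_one hb) (hsnd ▸ p.getVert_mem_support 1)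

theorem Connected.degree_pos_of_two_le_bettiNumber (hconn : B.Connected)
    (hβ : 2 ≤ B.bettiNumber) (v : V) : 0 < B.degree v := by
  obtain ⟨w, hw⟩ := exists_two_lt_degree hβ
  obtain ⟨u, hu⟩ := (B.degree_pos_iff_exists_adj w).1 (by omega)
  have : Nontrivial V := ⟨⟨w, u, hu.ne⟩⟩
  exact hconn.preconnected.degree_pos_of_nontrivial v

theorem Connected.two_le_degree_of_adj_of_degree_le_one (hconn : B.Connected)
    (hβ : 2 ≤ B.bettiNumber) {a b : V} (hab : B.Adj a b) (ha : B.degree a ≤ 1) :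
    2 ≤ B.degree b := by
  by_contra! hb
  obtain ⟨c, hc⟩ := exists_two_lt_degree hβ
  rcases hconn.eq_or_eq_of_adj_of_degree_le_one hab ha (by omega) c with rfl | rfl <;> omega

end Degree

end SimpleGraph

section Pivot

variable {V G : Type*} [Group G] [MulAction G V] {B : SimpleGraph V} {v : V}

theorem IsPivot.even_degree [Fintype V] [DecidableRel B.Adj] (hact : B.IsAutAction G)
    (hv : IsPivot B G v) : Even (B.degree v) := by
  rw [← card_neighborFinset_eq_degree]
  refine even_card_of_even_ncard_orbit (H := stabilizer G v) _ (fun ⟨g, hg⟩ y hy ↦ ?_)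
    fun y hy ↦ hv y ((mem_neighborFinset ..).1 hy)
  rw [mem_neighborFinset] at hy ⊢
  simpa [(mem_stabilizer_iff.1 hg : g • v = v)] using hact g _ _ hy

theorem IsPivot.mem_orbit_of_degree_eq_two [Fintype V] [DecidableRel B.Adj]
    (hact : B.IsAutAction G) (hv : IsPivot B G v) (hd : B.degree v = 2) {y z : V}
    (hy : B.Adj v y) (hz : B.Adj v z) : z ∈ orbit (stabilizer G v) y := by
  have hsub : orbit (stabilizer G v) y ⊆ B.neighborSet v := by
    rintro _ ⟨⟨g, hg⟩, rfl⟩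
    simpa [(mem_stabilizer_iff.1 hg : g • v = v)] using hact g _ _ hy
  have hcard : (B.neighborSet v).ncard = 2 := by
    rw [← coe_neighborFinset, Set.ncard_coe_finset, card_neighborFinset_eq_degree, hd]
  have hpos : 0 < (orbit (stabilizer G v) y).ncard :=
    (Set.ncard_pos (Set.toFinite _)).2 ⟨y, mem_orbit_self y⟩
  obtain ⟨r, hr⟩ := hv y hy
  have := Set.ncard_le_ncard hsub
  rw [Set.eq_of_subset_of_ncard_le hsub (by omega)]
  exact hz

theorem IsPivot.induce {p : SubMulAction G V} {v : (p : Set V)} (hv : IsPivot B G (v : V)) :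
    IsPivot (B.induce (p : Set V)) G v := by
  intro w hw
  have himage :
      Subtype.val '' orbit (stabilizer G v) w = orbit (stabilizer G (v : V)) (w : V) := by
    ext x
    constructor
    · rintro ⟨_, ⟨⟨g, hg⟩, rfl⟩, rfl⟩
      exact ⟨⟨g, congrArg Subtype.val hg⟩, rfl⟩
    · rintro ⟨⟨g, hg⟩, rfl⟩
      exact ⟨g • w, ⟨⟨g, Subtype.ext hg⟩, rfl⟩, rfl⟩
  rw [← Set.ncard_image_of_injective _ Subtype.val_injective, himage]
  exact hv w hw

end Pivot

namespace SimpleGraph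

variable {V G : Type*} [Group G] [MulAction G V] {B : SimpleGraph V} [Fintype V]

section Degree

variable [DecidableRel B.Adj]

open Classical in
theorem IsAutAction.pivot_add_card_upNeighborFinset_le (hact : B.IsAutAction G) {f : V → ℕ}
    (hf : ∀ (g : G) (x : V), f (g • x) = f x) {x : V} (hx : 2 ≤ B.degree x)
    (hdown : B.degree x = 2 → (B.downNeighborFinset f x).Nonempty) :
    2 * (if IsPivot B G x then 1 else 0 : ℤ) + #(B.upNeighborFinset f x)
      ≤ #(B.downNeighborFinset f x) + 3 * ((B.degree x : ℤ) - 2) := by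
  have hle := card_downNeighborFinset_add_card_upNeighborFinset_le (B := B) f x
  by_cases hp : IsPivot B G x
  · obtain ⟨r, hr⟩ := hp.even_degree hact
    rw [if_pos hp]
    rcases hx.eq_or_lt with hd | hd
    · obtain ⟨y, hy⟩ := hdown hd.symm
      rw [downNeighborFinset, mem_filter, mem_neighborFinset] at hy
      have hall : B.downNeighborFinset f x = B.neighborFinset x := by
        refine filter_true_of_mem fun z hz ↦ ?_
        obtain ⟨g, rfl⟩ := hp.mem_orbit_of_degree_eq_two hact hd.symm hy.1
          ((mem_neighborFinset ..).1 hz)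
        rw [← hy.2]
        exact congrArg (· + 1) (hf g y)
      rw [hall, card_neighborFinset_eq_degree] at hle ⊢
      omega
    · omega
  · rw [if_neg hp]
    rcases hx.eq_or_lt with hd | hd
    · have := (hdown hd.symm).card_pos
      omega
    · omega

theorem IsAutAction.card_isPivot_le_of_two_le_degree (hact : B.IsAutAction G)
    (hconn : B.Connected) (hβ : 2 ≤ B.bettiNumber) (hmin : ∀ x, 2 ≤ B.degree x) :
    ({v | IsPivot B G v}.ncard : ℤ) ≤ 3 * (B.bettiNumber - 1) := by
  classical
  set T : Set V := {x | B.degree x ≠ 2}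
  have hT : T.Nonempty := (exists_two_lt_degree hβ).imp fun x hx ↦ hx.ne'
  have hf := hact.infDist_smul hconn (T := T) fun g t ↦ by simp [T, hact.degree_smul]
  have hdown (x : V) (hx : B.degree x = 2) :
      (B.downNeighborFinset (B.infDist T) x).Nonempty := by
    obtain ⟨y, hxy, hy⟩ := hconn.exists_adj_infDist_add_one hT (by simpa [T] using hx)
    exact ⟨y, mem_filter.2 ⟨(mem_neighborFinset ..).2 hxy, hy⟩⟩
  have key := sum_le_sum fun x (_ : x ∈ univ) ↦
    hact.pivot_add_card_upNeighborFinset_le hf (hmin x) (hdown x)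
  simp only [sum_add_distrib, ← mul_sum, sum_degree_sub_two, sum_boole, ← Nat.cast_sum,
    sum_card_downNeighborFinset] at key
  rw [Set.ncard_eq_toFinset_card', Set.toFinset_ofPred]
  linarith

def IsAutAction.twoLeDegree (hact : B.IsAutAction G) : SubMulAction G V where
  carrier := {v | 2 ≤ B.degree v}
  smul_mem' g v hv := by rwa [Set.mem_ofPred_eq, hact.degree_smul]

@[simp]
theorem IsAutAction.mem_twoLeDegree (hact : B.IsAutAction G) {v : V} :
    v ∈ hact.twoLeDegree ↔ 2 ≤ B.degree v :=
  Iff.rfl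

theorem IsAutAction.connected_induce_twoLeDegree (hact : B.IsAutAction G) (hconn : B.Connected)
    (hβ : 2 ≤ B.bettiNumber) : (B.induce (hact.twoLeDegree : Set V)).Connected := by
  obtain ⟨w, hw⟩ := exists_two_lt_degree hβ
  have : Nonempty (hact.twoLeDegree : Set V) := ⟨⟨w, hw.le⟩⟩
  exact ⟨hconn.preconnected.induce_of_degree_eq_one fun v hv ↦
    subsingleton_neighborSet_of_degree_le_one (by simpa using hv)⟩

theorem IsAutAction.bettiNumber_induce_twoLeDegree (hact : B.IsAutAction G)
    (hconn : B.Connected) (hβ : 2 ≤ B.bettiNumber) :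
    (B.induce (hact.twoLeDegree : Set V)).bettiNumber = B.bettiNumber := by
  refine bettiNumber_induce_of_pendant (fun v hv ↦ ?_) fun v w hv hvw ↦ ?_
  · have := hconn.degree_pos_of_two_le_bettiNumber hβ v
    simp only [SetLike.mem_coe, mem_twoLeDegree, not_le] at hv
    omega
  · simp only [SetLike.mem_coe, mem_twoLeDegree, not_le] at hv ⊢
    exact hconn.two_le_degree_of_adj_of_degree_le_one hβ hvw (by omega)

theorem IsAutAction.ncard_isPivot_le_induce_twoLeDegree (hact : B.IsAutAction G)
    (hconn : B.Connected) (hβ : 2 ≤ B.bettiNumber) :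
    {v | IsPivot B G v}.ncard
      ≤ {v | IsPivot (B.induce (hact.twoLeDegree : Set V)) G v}.ncard := by
  have hsub : {v | IsPivot B G v}
      ⊆ Subtype.val '' {v | IsPivot (B.induce (hact.twoLeDegree : Set V)) G v} := by
    intro v hv
    have hmem : 2 ≤ B.degree v := by
      obtain ⟨r, hr⟩ := hv.even_degree hact
      have := hconn.degree_pos_of_two_le_bettiNumber hβ v
      omega
    exact ⟨⟨v, hmem⟩, IsPivot.induce hv, rfl⟩
  exact (Set.ncard_le_ncard hsub).trans (Set.ncard_image_of_injective _ Subtype.val_injective).le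

end Degree

theorem IsAutAction.card_isPivot_le (hact : B.IsAutAction G) (hconn : B.Connected)
    (hβ : 2 ≤ B.bettiNumber) : ({v | IsPivot B G v}.ncard : ℤ) ≤ 3 * (B.bettiNumber - 1) := by
  induction hn : Fintype.card V using Nat.strong_induction_on generalizing V with
  | _ n ih =>
  classical
  by_cases hmin : ∀ x, 2 ≤ B.degree x
  · exact hact.card_isPivot_le_of_two_le_degree hconn hβ hmin
  push Not at hmin
  obtain ⟨ℓ, hℓ⟩ := hmin
  have hβ' := hact.bettiNumber_induce_twoLeDegree hconn hβ
  have hlt : Fintype.card (hact.twoLeDegree : Set V) < n :=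
    hn ▸ Fintype.card_subtype_lt (p := (· ∈ (hact.twoLeDegree : Set V))) (x := ℓ)
      (by simpa using hℓ)
  have key := ih _ hlt (hact.induce _) (hact.connected_induce_twoLeDegree hconn hβ) (hβ' ▸ hβ) rfl
  rw [hβ'] at key
  exact le_trans (by exact_mod_cast hact.ncard_isPivot_le_induce_twoLeDegree hconn hβ) key

end SimpleGraph

/-- If a group `G` acts by graph automorphisms on a finite connected graph `B` with
`β(B) ≥ 2`, then the number of `G`-pivot vertices of `B` is at most `3(β(B) - 1)`. -/
theorem stmt_7 {V : Type*} [Fintype V] (B : SimpleGraph V)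
    (G : Type*) [Group G] [MulAction G V]
    (hact : ∀ (g : G) (a b : V), B.Adj a b → B.Adj (g • a) (g • b))
    (hconn : B.Connected)
    (hβ : 2 ≤ (B.edgeSet.ncard : ℤ) - (Fintype.card V : ℤ) + 1) :
    ({v : V | IsPivot B G v}.ncard : ℤ)
      ≤ 3 * (((B.edgeSet.ncard : ℤ) - (Fintype.card V : ℤ) + 1) - 1) := by
  have hβ' : 2 ≤ B.bettiNumber := by rwa [bettiNumber, Nat.card_eq_fintype_card]
  simpa only [bettiNumber, Nat.card_eq_fintype_card] using
    IsAutAction.card_isPivot_le (G := G) hact hconn hβ'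
end

section
/- Let X be a projective curve over a perfect field k. Then the bipartite intersection graph B_X of X (whose cyan vertices are the irreducible components of X ×_k k_alg and whose pink vertices are the points lying on at least two distinct irreducible components, with adjacency given by incidence) is connected if and only if X is geometrically connected. -/
/-!
Every vertex of the intersection graph stands for a connected subset of the space (an irreducible
component, or a single point), and adjacent vertices stand for intersecting subsets; so along the
paths of a connected graph these subsets chain together into a connected cover of the whole space.
Conversely, when there are only finitely many irreducible components, sending a point to the graph
component of the irreducible components through it is locally constant: the preimage of any set of
graph components is a finite union of irreducible components, hence closed, and so is the preimage
of its complement. On a connected space it is therefore constant. A proper scheme over a field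
stays Noetherian after base change to another field, so it has finitely many irreducible components.
-/

open AlgebraicGeometry CategoryTheory Opposite Limits

variable {K : Type} [Field K]

/-- The ring homomorphism `K →+* Γ(C, U)` for a scheme `C` over `Spec K`. -/
noncomputable def secAlgHom (C : Scheme) (f : C ⟶ Spec (CommRingCat.of K)) (U : C.Opens) :
    K →+* Γ(C, U) :=
  RingHom.comp (C.presheaf.map (homOfLE (le_top : U ≤ ⊤)).op).hom
    (RingHom.comp f.appTop.hom (Scheme.ΓSpecIso (CommRingCat.of K)).inv.hom)

/-- The `K`-module structure on `Γ(C, U)` for a scheme `C` over `Spec K`. -/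
noncomputable def secModule (C : Scheme) (f : C ⟶ Spec (CommRingCat.of K)) (U : C.Opens) :
    Module K Γ(C, U) :=
  letI := (secAlgHom C f U).toAlgebra
  Algebra.toModule

lemma secAlgHom_res (C : Scheme) (f : C ⟶ Spec (CommRingCat.of K)) {U V : C.Opens}
    (h : V ≤ U) (c : K) :
    (C.presheaf.map (homOfLE h).op) (secAlgHom C f U c) = secAlgHom C f V c := by
  simp only [secAlgHom, RingHom.comp_apply]
  rw [← CommRingCat.comp_apply, ← Functor.map_comp, ← op_comp, homOfLE_comp]

lemma res_smul (C : Scheme) (f : C ⟶ Spec (CommRingCat.of K)) {U V : C.Opens}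
    (h : V ≤ U) (c : K) (x : Γ(C, U)) :
    letI := secModule C f U
    letI := secModule C f V
    (C.presheaf.map (homOfLE h).op) (c • x)
      = c • ((C.presheaf.map (homOfLE h).op) x) := by
  letI := secModule C f U
  letI := secModule C f V
  show (C.presheaf.map (homOfLE h).op) (secAlgHom C f U c * x) = secAlgHom C f V c * _
  rw [map_mul, secAlgHom_res]

/-- The dimension over `K` of the first Čech cohomology group of the structure sheaf of a
scheme `C` over `K` with respect to the family of opens `U`. -/
noncomputable def cechH1finrank (C : Scheme) (f : C ⟶ Spec (CommRingCat.of K))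
    {ι : Type} (U : ι → C.Opens) : ℕ :=
  letI : ∀ W : C.Opens, Module K Γ(C, W) := fun W => secModule C f W
  let d0 : ((i : ι) → Γ(C, U i)) →ₗ[K] ((p : ι × ι) → Γ(C, U p.1 ⊓ U p.2)) :=
    { toFun := fun s p =>
        (C.presheaf.map (homOfLE (inf_le_right : U p.1 ⊓ U p.2 ≤ U p.2)).op) (s p.2)
          - (C.presheaf.map (homOfLE (inf_le_left : U p.1 ⊓ U p.2 ≤ U p.1)).op) (s p.1)
      map_add' := by
        intro s t; funext p
        simp only [Pi.add_apply, map_add]; ring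
      map_smul' := by
        intro c s; funext p
        simp only [Pi.smul_apply, RingHom.id_apply, res_smul C f, smul_sub] }
  let d1 : ((p : ι × ι) → Γ(C, U p.1 ⊓ U p.2)) →ₗ[K]
      ((q : ι × ι × ι) → Γ(C, (U q.1 ⊓ U q.2.1) ⊓ U q.2.2)) :=
    { toFun := fun t q =>
        (C.presheaf.map (homOfLE (inf_le_left :
            (U q.1 ⊓ U q.2.1) ⊓ U q.2.2 ≤ U q.1 ⊓ U q.2.1)).op) (t (q.1, q.2.1))
          + (C.presheaf.map (homOfLE (le_inf (inf_le_left.trans inf_le_right) inf_le_right :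
              (U q.1 ⊓ U q.2.1) ⊓ U q.2.2 ≤ U q.2.1 ⊓ U q.2.2)).op) (t (q.2.1, q.2.2))
          - (C.presheaf.map (homOfLE (le_inf (inf_le_left.trans inf_le_left) inf_le_right :
              (U q.1 ⊓ U q.2.1) ⊓ U q.2.2 ≤ U q.1 ⊓ U q.2.2)).op) (t (q.1, q.2.2))
      map_add' := by
        intro s t; funext q
        simp only [Pi.add_apply, map_add]; ring
      map_smul' := by
        intro c s; funext q
        simp only [Pi.smul_apply, RingHom.id_apply, res_smul C f, smul_sub, smul_add] }
  Module.finrank K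
    ((LinearMap.ker d1) ⧸
      (Submodule.comap (LinearMap.ker d1).subtype (LinearMap.range d0)))

/-- `C` (a scheme over `K` via `f`) has arithmetic genus `g` over `K`:
for every finite affine open cover, `g = 1 - dim_K H⁰(C, O_C) + dim_K H¹(C, O_C)`,
where the cohomology is computed as Čech cohomology with respect to the cover;
moreover a finite affine open cover is required to exist. -/
noncomputable def HasGenus (C : Scheme) (f : C ⟶ Spec (CommRingCat.of K)) (g : ℤ) : Prop :=
  (∃ (n : ℕ) (U : Fin n → C.Opens), iSup U = ⊤ ∧ ∀ i, IsAffineOpen (U i)) ∧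
  ∀ (n : ℕ) (U : Fin n → C.Opens), iSup U = ⊤ → (∀ i, IsAffineOpen (U i)) →
    letI := secModule C f ⊤
    g = 1 - (Module.finrank K Γ(C, ⊤) : ℤ) + (cechH1finrank C f U : ℤ)

/-- A projective curve over `K`: a proper `K`-scheme of dimension `1`
(properness is equivalent to projectivity for curves over a field). -/
def IsProjectiveCurve (C : Scheme) (f : C ⟶ Spec (CommRingCat.of K)) : Prop :=
  IsProper f ∧ topologicalKrullDim C = 1

/-- A regular local ring. -/
def IsRegLocalRing (R : Type*) [CommRing R] [IsLocalRing R] : Prop :=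
  IsNoetherianRing R ∧ ∃ s : Finset R, Ideal.span (s : Set R) = IsLocalRing.maximalIdeal R ∧
    (s.card : WithBot ℕ∞) = ringKrullDim R

/-- A scheme is regular if all of its stalks are regular local rings. -/
def IsRegularScheme (C : Scheme) : Prop :=
  ∀ x : C, IsRegLocalRing (C.presheaf.stalk x)

/-- The degree `[κ(x) : K]` of a point `x` of a scheme `C` over `K`. -/
noncomputable def pointDegree (C : Scheme) (f : C ⟶ Spec (CommRingCat.of K)) (x : C) : ℕ :=
  letI : Algebra K (C.residueField x) :=
    (RingHom.comp (C.Γevaluation x).hom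
      (RingHom.comp f.appTop.hom (Scheme.ΓSpecIso (CommRingCat.of K)).inv.hom) : K →+* _).toAlgebra
  Module.finrank K (C.residueField x)

/-- The canonical homomorphism from `K` to the function field of an irreducible scheme `C`
over `K`. -/
noncomputable def ffHom (C : Scheme) [IrreducibleSpace C] (f : C ⟶ Spec (CommRingCat.of K)) :
    K →+* C.functionField :=
  letI : Nonempty (⊤ : C.Opens) := ⟨⟨(inferInstance : Nonempty C).some, trivial⟩⟩
  RingHom.comp (algebraMap Γ(C, ⊤) C.functionField)
    (RingHom.comp f.appTop.hom (Scheme.ΓSpecIso (CommRingCat.of K)).inv.hom)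

/-- `C` is birational over `K` to the projective line over `L`, i.e. the function field of `C`
is `K`-isomorphic to the rational function field `L(t)`. -/
def IsBirationalToP1 (C : Scheme) [IrreducibleSpace C] (f : C ⟶ Spec (CommRingCat.of K))
    (L : Type) [Field L] [Algebra K L] : Prop :=
  ∃ e : C.functionField ≃+* RatFunc L,
    ∀ c : K, e (ffHom C f c) = algebraMap K (RatFunc L) c

attribute [local instance] MvPolynomial.gradedAlgebra

/-- The constants, as a ring homomorphism to the degree-zero part of `K[X,Y,Z]`. -/
noncomputable def constHom (K : Type) [Field K] :
    K →+* (MvPolynomial.homogeneousSubmodule (Fin 3) K 0) where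
  toFun c := ⟨MvPolynomial.C c, by
    simp [MvPolynomial.mem_homogeneousSubmodule, MvPolynomial.isHomogeneous_C]⟩
  map_one' := by ext; simp
  map_mul' x y := by ext; simp
  map_zero' := by ext; simp
  map_add' x y := by ext; simp

/-- The structure morphism of the projective plane `ℙ²_K = Proj K[X,Y,Z]`. -/
noncomputable def projPlaneToSpec (K : Type) [Field K] :
    Proj (MvPolynomial.homogeneousSubmodule (Fin 3) K) ⟶ Spec (CommRingCat.of K) :=
  Proj.toSpecZero _ ≫ Spec.map (CommRingCat.ofHom (constHom K))

/-- The dehomogenization `q/f²` of a quadric `q` on the affine chart `D₊(f)` of `ℙ²_K`. -/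
noncomputable def qOnChart {K : Type} [Field K] (q f : MvPolynomial (Fin 3) K)
    (hq : q ∈ MvPolynomial.homogeneousSubmodule (Fin 3) K 2)
    (hf : f ∈ MvPolynomial.homogeneousSubmodule (Fin 3) K 1) :
    HomogeneousLocalization.Away (MvPolynomial.homogeneousSubmodule (Fin 3) K) f :=
  HomogeneousLocalization.mk
    ⟨2, ⟨q, hq⟩, ⟨f ^ 2, by simpa using SetLike.pow_mem_graded 2 hf⟩, ⟨2, rfl⟩⟩

/-- `C` is a conic over `K`: a projective curve over `K` which is isomorphic over `K` to the
closed subscheme of `ℙ²_K` cut out by a homogeneous polynomial `q` of degree `2`; the latter is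
expressed by a closed immersion `ι : C ⟶ ℙ²_K` over `K` which, on each affine chart `D₊(f)`
(`f` linear), identifies `C` with `Spec` of the quotient by the dehomogenization of `q`. -/
def IsConic (C : Scheme) (fC : C ⟶ Spec (CommRingCat.of K)) : Prop :=
  IsProjectiveCurve C fC ∧
  ∃ (q : MvPolynomial (Fin 3) K)
    (hq : q ∈ MvPolynomial.homogeneousSubmodule (Fin 3) K 2)
    (ι : C ⟶ Proj (MvPolynomial.homogeneousSubmodule (Fin 3) K)),
    IsClosedImmersion ι ∧ ι ≫ projPlaneToSpec K = fC ∧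
    ∀ (f : MvPolynomial (Fin 3) K)
      (hf : f ∈ MvPolynomial.homogeneousSubmodule (Fin 3) K 1),
      ∃ e : pullback ι (Proj.awayι _ f hf one_pos) ≅
          Spec (CommRingCat.of
            ((HomogeneousLocalization.Away (MvPolynomial.homogeneousSubmodule (Fin 3) K) f)
              ⧸ Ideal.span {qOnChart q f hq hf})),
        e.hom ≫ Spec.map (CommRingCat.ofHom (Ideal.Quotient.mk _))
          = pullback.snd ι (Proj.awayι _ f hf one_pos)

section IntersectionGraph

variable {k : Type} [Field k]

/-- The base change of `X` to the algebraic closure of `k`. -/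
noncomputable def baseChangeToAlgClosure (X : Scheme) (f : X ⟶ Spec (CommRingCat.of k)) :
    Scheme :=
  pullback f (Spec.map (CommRingCat.ofHom (algebraMap k (AlgebraicClosure k))))

/-- The set of points of a topological space lying on at least two distinct irreducible
components. -/
def multiComponentPoints (T : Type*) [TopologicalSpace T] : Set T :=
  {x : T | ∃ Y Z : Set T, Y ∈ irreducibleComponents T ∧ Z ∈ irreducibleComponents T ∧
    Y ≠ Z ∧ x ∈ Y ∧ x ∈ Z}

/-- The bipartite intersection graph of a topological space: its vertices are the irreducible
components together with the points lying on at least two distinct irreducible components, a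
component and a point being adjacent if and only if the point lies on the component. -/
def intersectionGraph (T : Type*) [TopologicalSpace T] :
    SimpleGraph (↥(irreducibleComponents T) ⊕ ↥(multiComponentPoints T)) :=
  SimpleGraph.fromRel (fun a b =>
    ∃ (Y : ↥(irreducibleComponents T)) (P : ↥(multiComponentPoints T)),
      a = Sum.inl Y ∧ b = Sum.inr P ∧ (P : T) ∈ (Y : Set T))


namespace intersectionGraph

variable {T : Type*} [TopologicalSpace T]

def componentVertex (x : T) : ↥(irreducibleComponents T) ⊕ ↥(multiComponentPoints T) :=
  .inl ⟨irreducibleComponent x, irreducibleComponent_mem_irreducibleComponents x⟩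

def locus : ↥(irreducibleComponents T) ⊕ ↥(multiComponentPoints T) → Set T
  | .inl Y => Y
  | .inr P => {(P : T)}

lemma adj_inl_inr {Y : ↥(irreducibleComponents T)} {P : ↥(multiComponentPoints T)}
    (h : (P : T) ∈ (Y : Set T)) : (intersectionGraph T).Adj (.inl Y) (.inr P) :=
  ⟨by simp, .inl ⟨Y, P, rfl, rfl, h⟩⟩

lemma locus_inter_nonempty_of_adj
    {u v : ↥(irreducibleComponents T) ⊕ ↥(multiComponentPoints T)}
    (h : (intersectionGraph T).Adj u v) : (locus u ∩ locus v).Nonempty := by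
  obtain ⟨-, ⟨Y, P, rfl, rfl, hP⟩ | ⟨Y, P, rfl, rfl, hP⟩⟩ := h
  · exact ⟨P, hP, rfl⟩
  · exact ⟨P, rfl, hP⟩

lemma isPreconnected_locus (v : ↥(irreducibleComponents T) ⊕ ↥(multiComponentPoints T)) :
    IsPreconnected (locus v) := by
  cases v with
  | inl Y => exact (IsIrreducible.isConnected Y.2.1).isPreconnected
  | inr P => exact isPreconnected_singleton

lemma reachable_inl_of_mem {Y Z : ↥(irreducibleComponents T)} {x : T}
    (hY : x ∈ (Y : Set T)) (hZ : x ∈ (Z : Set T)) :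
    (intersectionGraph T).Reachable (.inl Y) (.inl Z) := by
  obtain rfl | hYZ := eq_or_ne Y Z
  · rfl
  · let P : ↥(multiComponentPoints T) :=
      ⟨x, Y, Z, Y.2, Z.2, Subtype.coe_ne_coe.mpr hYZ, hY, hZ⟩
    exact (adj_inl_inr (P := P) hY).reachable.trans (adj_inl_inr (P := P) hZ).reachable.symm

lemma reachable_componentVertex_of_mem {Y : ↥(irreducibleComponents T)} {x : T}
    (hx : x ∈ (Y : Set T)) : (intersectionGraph T).Reachable (componentVertex x) (.inl Y) :=
  reachable_inl_of_mem mem_irreducibleComponent hx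

lemma exists_reachable_componentVertex
    (v : ↥(irreducibleComponents T) ⊕ ↥(multiComponentPoints T)) :
    ∃ x, (intersectionGraph T).Reachable (componentVertex x) v := by
  cases v with
  | inl Y =>
    obtain ⟨y, hy⟩ := IsIrreducible.nonempty Y.2.1
    exact ⟨y, reachable_componentVertex_of_mem hy⟩
  | inr P => exact ⟨P, (adj_inl_inr mem_irreducibleComponent).reachable⟩

lemma connectedSpace_of_connected (h : (intersectionGraph T).Connected) : ConnectedSpace T := by
  obtain ⟨x, -⟩ := exists_reachable_componentVertex h.nonempty.some
  have hunion : (⋃ v, locus v) = (Set.univ : Set T) :=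
    Set.eq_univ_of_forall fun y =>
      Set.mem_iUnion.mpr ⟨componentVertex y, mem_irreducibleComponent⟩
  have hpre : IsPreconnected (Set.univ : Set T) :=
    hunion ▸ IsPreconnected.iUnion_of_reflTransGen isPreconnected_locus fun u v =>
      Relation.ReflTransGen.mono (fun _ _ => locus_inter_nonempty_of_adj) _ _
        ((SimpleGraph.reachable_iff_reflTransGen u v).mp (h u v))
  exact { isPreconnected_univ := hpre, toNonempty := ⟨x⟩ }

noncomputable def componentClass (x : T) : (intersectionGraph T).ConnectedComponent :=
  (intersectionGraph T).connectedComponentMk (componentVertex x)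

lemma componentClass_eq_of_mem {Y : ↥(irreducibleComponents T)} {x : T}
    (hx : x ∈ (Y : Set T)) :
    componentClass x = (intersectionGraph T).connectedComponentMk (.inl Y) :=
  SimpleGraph.ConnectedComponent.sound (reachable_componentVertex_of_mem hx)

lemma isClosed_preimage_componentClass (hfin : (irreducibleComponents T).Finite)
    (s : Set (intersectionGraph T).ConnectedComponent) :
    IsClosed (componentClass ⁻¹' s) := by
  have : Finite ↥(irreducibleComponents T) := hfin.to_subtype
  have hpre : componentClass ⁻¹' s =
      ⋃ Y ∈ {Y : ↥(irreducibleComponents T) |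
        (intersectionGraph T).connectedComponentMk (.inl Y) ∈ s}, (Y : Set T) := by
    ext x
    simp only [Set.mem_preimage, Set.mem_iUnion, Set.mem_ofPred_eq, exists_prop]
    constructor
    · exact fun hx => ⟨_, hx, mem_irreducibleComponent⟩
    · rintro ⟨Y, hY, hxY⟩
      rwa [componentClass_eq_of_mem hxY]
  rw [hpre]
  exact (Set.toFinite _).isClosed_biUnion fun Y _ => isClosed_of_mem_irreducibleComponents _ Y.2

lemma isLocallyConstant_componentClass (hfin : (irreducibleComponents T).Finite) :
    IsLocallyConstant (componentClass (T := T)) := fun s => by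
  simpa using (isClosed_preimage_componentClass hfin sᶜ).isOpen_compl

lemma connected_of_connectedSpace (hfin : (irreducibleComponents T).Finite) [ConnectedSpace T] :
    (intersectionGraph T).Connected := by
  obtain ⟨x₀⟩ := ‹ConnectedSpace T›.toNonempty
  refine (SimpleGraph.connected_iff_exists_forall_reachable _).mpr
    ⟨componentVertex x₀, fun v => ?_⟩
  obtain ⟨x, hx⟩ := exists_reachable_componentVertex v
  have hclass : componentClass x₀ = componentClass x :=
    (isLocallyConstant_componentClass hfin).apply_eq_of_preconnectedSpace x₀ x
  exact (SimpleGraph.ConnectedComponent.exact hclass).trans hx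

theorem connected_iff_connectedSpace (hfin : (irreducibleComponents T).Finite) :
    (intersectionGraph T).Connected ↔ ConnectedSpace T :=
  ⟨connectedSpace_of_connected, fun _ => connected_of_connectedSpace hfin⟩

end intersectionGraph

instance isNoetherian_pullback_of_locallyOfFiniteType {X Y S : Scheme}
    (f : X ⟶ S) (g : Y ⟶ S) [QuasiCompact f] [LocallyOfFiniteType f] [IsNoetherian Y] :
    IsNoetherian (pullback f g) :=
  {}

theorem stmt_18_general (X : Scheme) (f : X ⟶ Spec (CommRingCat.of k))
    (hcurve : IsProjectiveCurve X f) :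
    (intersectionGraph (baseChangeToAlgClosure X f)).Connected
      ↔ ConnectedSpace (baseChangeToAlgClosure X f) := by
  have : IsProper f := hcurve.1
  exact intersectionGraph.connected_iff_connectedSpace
    (finite_irreducibleComponents_of_isNoetherian (X := pullback f _))

/-- For a projective curve `X` over a perfect field `k`, the bipartite intersection graph of
`X ×_k k_alg` is connected if and only if `X` is geometrically connected. -/
theorem stmt_18 [PerfectField k] (X : Scheme) (f : X ⟶ Spec (CommRingCat.of k))
    (hcurve : IsProjectiveCurve X f) :
    (intersectionGraph (baseChangeToAlgClosure X f)).Connected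
      ↔ ConnectedSpace (baseChangeToAlgClosure X f) :=
  stmt_18_general X f hcurve
end IntersectionGraph
end

section
/- Let n ≥ 3 be even and let B be the cycle graph on n vertices, with G' ≤ Aut(B) the dihedral subgroup of order n (index 2, noncyclic). Then the vertices of B form exactly two G'-orbits, and if n ≡ 2 mod 4, every vertex of B is a G'-pivot vertex, so the number of G'-orbits of G'-pivot vertices equals 2. -/
open SimpleGraph

/-- The cycle graph on `ℤ/n`. -/
def cycGraph (n : ℕ) : SimpleGraph (ZMod n) :=
  SimpleGraph.fromRel (fun i j => j = i + 1)

/-- The dihedral subgroup of order `n` of the automorphism group of the cycle graph on `n`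
vertices (`n ≥ 3` even): it is generated by the rotation by `2` and a reflection. -/
def dihedralHalf (n : ℕ) : Subgroup (Equiv.Perm (ZMod n)) :=
  Subgroup.closure {Equiv.addLeft (2 : ZMod n), Equiv.neg (ZMod n)}

/-
Every element of `G'` is an affine map `x ↦ ±x + 2c` of `ℤ/n`, and all of these lie in `G'`.
Hence the `G'`-orbit of `v` is the coset `v + 2ℤ/n`, and since `n` is even there are exactly two
such cosets, the even and the odd vertices. The stabilizer of `v` consists of the identity and the
reflection `x ↦ 2v - x`, so it moves each neighbour `v ± 1` to the other one `v ∓ 1`; these differ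
because `2 ≠ 0` in `ℤ/n` for `n ≥ 3`, so every stabilizer orbit of a neighbour has size two.
-/

open MulAction

namespace dihedralHalf

variable {n : ℕ}

theorem eq_add_or_eq_neg_add_of_mem {g : Equiv.Perm (ZMod n)} (hg : g ∈ dihedralHalf n) :
    (∃ c : ZMod n, ∀ x, g x = x + 2 * c) ∨ (∃ c : ZMod n, ∀ x, g x = -x + 2 * c) := by
  induction hg using Subgroup.closure_induction with
  | mem g hg =>
    rcases hg with rfl | rfl
    · exact .inl ⟨1, fun x => by simp [add_comm]⟩
    · exact .inr ⟨0, fun x => by simp⟩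
  | one => exact .inl ⟨0, fun x => by simp⟩
  | mul a b _ _ iha ihb =>
    rcases iha with ⟨c, hc⟩ | ⟨c, hc⟩ <;> rcases ihb with ⟨d, hd⟩ | ⟨d, hd⟩
    · exact .inl ⟨d + c, fun x => by simp only [Equiv.Perm.mul_apply, hc, hd]; ring⟩
    · exact .inr ⟨d + c, fun x => by simp only [Equiv.Perm.mul_apply, hc, hd]; ring⟩
    · exact .inr ⟨c - d, fun x => by simp only [Equiv.Perm.mul_apply, hc, hd]; ring⟩
    · exact .inl ⟨c - d, fun x => by simp only [Equiv.Perm.mul_apply, hc, hd]; ring⟩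
  | inv a _ iha =>
    rcases iha with ⟨c, hc⟩ | ⟨c, hc⟩
    · exact .inl ⟨-c, fun x => Equiv.Perm.inv_eq_iff_eq.2 (by rw [hc]; ring)⟩
    · exact .inr ⟨c, fun x => Equiv.Perm.inv_eq_iff_eq.2 (by rw [hc]; ring)⟩

theorem addLeft_two_mul_mem (c : ZMod n) : Equiv.addLeft (2 * c) ∈ dihedralHalf n := by
  obtain ⟨k, rfl⟩ := ZMod.intCast_surjective c
  have hk : Equiv.addLeft (2 : ZMod n) ^ k ∈ dihedralHalf n :=
    zpow_mem (Subgroup.subset_closure (Set.mem_insert _ _)) k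
  rwa [Equiv.zsmul_addLeft, zsmul_eq_mul, mul_comm] at hk

theorem addLeft_two_mul_mul_neg_mem (c : ZMod n) :
    Equiv.addLeft (2 * c) * Equiv.neg (ZMod n) ∈ dihedralHalf n :=
  mul_mem (addLeft_two_mul_mem c) (Subgroup.subset_closure (Or.inr rfl))

theorem mem_orbit_iff {v x : ZMod n} :
    x ∈ orbit (dihedralHalf n) v ↔ ∃ k : ZMod n, x = v + 2 * k := by
  constructor
  · rintro ⟨⟨g, hg⟩, rfl⟩
    rcases eq_add_or_eq_neg_add_of_mem hg with ⟨c, hc⟩ | ⟨c, hc⟩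
    · exact ⟨c, hc v⟩
    · exact ⟨c - v, (hc v).trans (by ring)⟩
  · rintro ⟨k, rfl⟩
    exact ⟨⟨_, addLeft_two_mul_mem k⟩, add_comm _ _⟩

theorem orbits_eq_pair :
    {s : Set (ZMod n) | ∃ v : ZMod n, s = orbit (dihedralHalf n) v}
      = {orbit (dihedralHalf n) 0, orbit (dihedralHalf n) 1} := by
  ext s
  constructor
  · rintro ⟨v, rfl⟩
    obtain ⟨m, rfl⟩ := ZMod.intCast_surjective v
    obtain ⟨k, rfl | rfl⟩ := Int.even_or_odd' m
    · exact .inl (orbit_eq_iff.2 (mem_orbit_iff.2 ⟨k, by push_cast; ring⟩))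
    · exact .inr (orbit_eq_iff.2 (mem_orbit_iff.2 ⟨k, by push_cast; ring⟩))
  · rintro (rfl | rfl)
    exacts [⟨0, rfl⟩, ⟨1, rfl⟩]

theorem one_notMem_orbit_zero (hn : 2 ∣ n) : (1 : ZMod n) ∉ orbit (dihedralHalf n) 0 := by
  intro h
  obtain ⟨k, hk⟩ := mem_orbit_iff.1 h
  have hk₂ := congrArg (ZMod.castHom hn (ZMod 2)) hk
  rw [map_one, map_add, map_zero, map_mul, map_ofNat] at hk₂
  generalize ZMod.castHom hn (ZMod 2) k = x at hk₂
  revert x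
  decide

theorem ncard_orbits (hn : Even n) :
    {s : Set (ZMod n) | ∃ v : ZMod n, s = orbit (dihedralHalf n) v}.ncard = 2 := by
  rw [orbits_eq_pair, Set.ncard_pair]
  exact fun h => one_notMem_orbit_zero hn.two_dvd (h ▸ mem_orbit_self 1)

theorem orbit_stabilizer_eq_pair (v w : ZMod n) :
    orbit (stabilizer (dihedralHalf n) v) w = {w, 2 * v - w} := by
  ext x
  constructor
  · rintro ⟨⟨⟨g, hg⟩, hfix⟩, rfl⟩
    replace hfix : g v = v := hfix
    change g w ∈ ({w, 2 * v - w} : Set (ZMod n))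
    rcases eq_add_or_eq_neg_add_of_mem hg with ⟨c, hc⟩ | ⟨c, hc⟩
    · have hc0 : 2 * c = 0 := by linear_combination (hc v).symm.trans hfix
      exact .inl (by rw [hc, hc0, add_zero])
    · have hcv : 2 * c = 2 * v := by linear_combination (hc v).symm.trans hfix
      exact .inr (show g w = 2 * v - w by rw [hc, hcv]; ring)
  · rintro (rfl | rfl)
    · exact mem_orbit_self x
    · refine ⟨⟨⟨_, addLeft_two_mul_mul_neg_mem v⟩, ?_⟩, ?_⟩
      · change 2 * v + -v = v
        ring
      · change 2 * v + -w = 2 * v - w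
        ring

theorem isPivot_cycGraph (h2 : (2 : ZMod n) ≠ 0) (v : ZMod n) :
    IsPivot (cycGraph n) (dihedralHalf n) v := by
  intro w hvw
  obtain ⟨-, rfl | rfl⟩ := SimpleGraph.fromRel_adj _ _ _ |>.1 hvw
  · rw [orbit_stabilizer_eq_pair, Set.ncard_pair fun h => h2 (by linear_combination h)]
    exact even_two
  · rw [orbit_stabilizer_eq_pair, Set.ncard_pair fun h => h2 (by linear_combination -h)]
    exact even_two

end dihedralHalf

/-- For `n ≥ 3` even, the vertices of the cycle graph on `n` vertices form exactly two orbits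
under the index-`2` dihedral subgroup `G'` of order `n`; and if `n ≡ 2 mod 4`, then every
vertex is a `G'`-pivot vertex, so the number of `G'`-orbits of `G'`-pivot vertices is `2`. -/
theorem stmt_19 (n : ℕ) (hn : 3 ≤ n) (heven : Even n) :
    ({s : Set (ZMod n) | ∃ v : ZMod n, s = MulAction.orbit (dihedralHalf n) v}.ncard = 2)
    ∧ (n % 4 = 2 →
        (∀ v : ZMod n, IsPivot (cycGraph n) (dihedralHalf n) v)
        ∧ {s : Set (ZMod n) | ∃ v : ZMod n,
            IsPivot (cycGraph n) (dihedralHalf n) v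
              ∧ s = MulAction.orbit (dihedralHalf n) v}.ncard = 2) := by
  have h2 : (2 : ZMod n) ≠ 0 := by
    rw [← ZMod.val_ne_zero, ZMod.val_ofNat_of_lt (show 2 < n by omega)]
    exact two_ne_zero
  have hpivot := dihedralHalf.isPivot_cycGraph h2
  refine ⟨dihedralHalf.ncard_orbits heven, fun _ => ⟨hpivot, ?_⟩⟩
  simpa only [hpivot, true_and] using dihedralHalf.ncard_orbits heven
end
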